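/- arXiv:1709.05219 — 8 statements merged into one kernel-verified Lean document; each statement's English description precedes it below -/
import Mathlib

section
/- In the game WAK played on two vertices with weights a and b, joined by an edge, with a loop on each vertex, the Grundy value equals ((a + b) mod 2) + 2 * (min(a,b) mod 2). -/
/-- The minimum excludant of a set of naturals. -/
noncomputable def mex (s : Set ℕ) : ℕ := sInf {n | n ∉ s}

/-- WAK on two vertices of weights `a`, `b`, joined by an edge, with a loop on each vertex.
Moves: `(a,b) → (a-1,b-1)` (edge, when `a,b > 0`), `(a,b) → (a-1,b)` (loop, when `a > 0`),
`(a,b) → (a,b-1)` (loop, when `b > 0`).  Grundy value = mex of options' Grundy values. -/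
noncomputable def twoLoopsGrundy : ℕ → ℕ → ℕ
  | 0, 0 => mex ∅
  | a + 1, 0 => mex {twoLoopsGrundy a 0}
  | 0, b + 1 => mex {twoLoopsGrundy 0 b}
  | a + 1, b + 1 =>
      mex {twoLoopsGrundy a b, twoLoopsGrundy a (b + 1), twoLoopsGrundy (a + 1) b}

lemma mex_eq_of {s : Set ℕ} {k : ℕ} (h1 : k ∉ s) (h2 : ∀ j < k, j ∈ s) : mex s = k := by
  refine le_antisymm (Nat.sInf_le h1) (le_csInf ⟨k, h1⟩ fun n hn => ?_)
  by_contra h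
  exact hn (h2 n (lt_of_not_ge h))

/-- The Grundy value of WAK on an edge with a loop on each endpoint is
`((a + b) mod 2) + 2 * (min(a,b) mod 2)`. -/
theorem twoLoopsGrundy_eq (a b : ℕ) :
    twoLoopsGrundy a b = (a + b) % 2 + 2 * (min a b % 2) := by
  induction a generalizing b with
  | zero =>
    induction b with
    | zero =>
      rw [twoLoopsGrundy]
      apply mex_eq_of (by simp) (by simp)
    | succ b ihb =>
      rw [twoLoopsGrundy, ihb]
      apply mex_eq_of
      · simp only [Set.mem_singleton_iff]; omega
      · intro j hj
        simp only [Set.mem_singleton_iff]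
        omega
  | succ a iha =>
    induction b with
    | zero =>
      rw [twoLoopsGrundy, iha]
      apply mex_eq_of
      · simp only [Set.mem_singleton_iff]; omega
      · intro j hj
        simp only [Set.mem_singleton_iff]
        omega
    | succ b ihb =>
      rw [twoLoopsGrundy, iha, iha, ihb]
      apply mex_eq_of
      · simp only [Set.mem_insert_iff, Set.mem_singleton_iff]; omega
      · intro j hj
        simp only [Set.mem_insert_iff, Set.mem_singleton_iff]
        omega
end

section
/- In the WAK game on a path of four vertices with weights a, b, c, d (edges a–b, b–c, c–d) and a loop on the vertex of weight a, restricted to positions satisfying c < b + d, a position is a P-position if and only if a + c is even. -/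
/-- Moves of WAK on the path `a – b – c – d` with a loop on the vertex of weight `a`:
loop on `a`; edge `a–b`; edge `b–c`; edge `c–d`.  Each move decrements the weights of the
endpoints of the chosen edge, and requires them to be positive. -/
def moves : ℕ × ℕ × ℕ × ℕ → Set (ℕ × ℕ × ℕ × ℕ) := fun p =>
  {q | (0 < p.1 ∧ q = (p.1 - 1, p.2.1, p.2.2.1, p.2.2.2)) ∨
       (0 < p.1 ∧ 0 < p.2.1 ∧ q = (p.1 - 1, p.2.1 - 1, p.2.2.1, p.2.2.2)) ∨
       (0 < p.2.1 ∧ 0 < p.2.2.1 ∧ q = (p.1, p.2.1 - 1, p.2.2.1 - 1, p.2.2.2)) ∨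
       (0 < p.2.2.1 ∧ 0 < p.2.2.2 ∧ q = (p.1, p.2.1, p.2.2.1 - 1, p.2.2.2 - 1))}

/-- Total weight of a position. -/
def wt : ℕ × ℕ × ℕ × ℕ → ℕ := fun p => p.1 + p.2.1 + p.2.2.1 + p.2.2.2

lemma moves_wt_lt : ∀ p q, q ∈ moves p → wt q < wt p := by
  rintro ⟨a, b, c, d⟩ ⟨a', b', c', d'⟩ h
  rcases h with ⟨h1, h2⟩ | ⟨h1, h2, h3⟩ | ⟨h1, h2, h3⟩ | ⟨h1, h2, h3⟩ <;>
    simp_all [wt, Prod.ext_iff] <;> omega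

/-- `isN p` : the position `p` of the path game is an N-position (some option is a
P-position); a position with no option is a P-position.  Normal play. -/
def isN : ℕ × ℕ × ℕ × ℕ → Prop := fun p =>
  ∃ q : {q // q ∈ moves p}, ¬ isN q.1
termination_by p => wt p
decreasing_by exact moves_wt_lt _ _ q.2


def Pp (a b c d : ℕ) : Prop :=
  (c < b + d → (a + c) % 2 = 0) ∧
  (b + d ≤ c →
    ((a % 2 = 0 ∧ b % 2 = 0 ∧ d % 2 = 0) ∨
     (a % 2 = 0 ∧ b % 2 = 1 ∧ a < b ∧ d % 2 = 1) ∨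
     (a % 2 = 1 ∧ b % 2 = 0 ∧ b < a ∧ d % 2 = 1)))

lemma isN_iff' (a b c d : ℕ) :
    isN (a, b, c, d) ↔
      ((0 < a ∧ ¬ isN (a - 1, b, c, d)) ∨
       (0 < a ∧ 0 < b ∧ ¬ isN (a - 1, b - 1, c, d)) ∨
       (0 < b ∧ 0 < c ∧ ¬ isN (a, b - 1, c - 1, d)) ∨
       (0 < c ∧ 0 < d ∧ ¬ isN (a, b, c - 1, d - 1))) := by
  rw [isN]
  constructor
  · rintro ⟨⟨q, hq⟩, hN⟩
    rcases hq with ⟨h1, rfl⟩ | ⟨h1, h2, rfl⟩ | ⟨h1, h2, rfl⟩ | ⟨h1, h2, rfl⟩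
    · exact Or.inl ⟨h1, hN⟩
    · exact Or.inr (Or.inl ⟨h1, h2, hN⟩)
    · exact Or.inr (Or.inr (Or.inl ⟨h1, h2, hN⟩))
    · exact Or.inr (Or.inr (Or.inr ⟨h1, h2, hN⟩))
  · rintro (⟨h1, hN⟩ | ⟨h1, h2, hN⟩ | ⟨h1, h2, hN⟩ | ⟨h1, h2, hN⟩)
    · exact ⟨⟨_, Or.inl ⟨h1, rfl⟩⟩, hN⟩
    · exact ⟨⟨_, Or.inr (Or.inl ⟨h1, h2, rfl⟩)⟩, hN⟩
    · exact ⟨⟨_, Or.inr (Or.inr (Or.inl ⟨h1, h2, rfl⟩))⟩, hN⟩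
    · exact ⟨⟨_, Or.inr (Or.inr (Or.inr ⟨h1, h2, rfl⟩))⟩, hN⟩

lemma step1 (a b c d : ℕ) (hp : Pp a b c d) : ¬ Pp (a + 1) b c d := by
  unfold Pp at *; omega

lemma step2 (a b c d : ℕ) (hp : Pp a b c d) : ¬ Pp (a + 1) (b + 1) c d := by
  unfold Pp at *; omega

lemma step3 (a b c d : ℕ) (hp : Pp a b c d) : ¬ Pp a (b + 1) (c + 1) d := by
  unfold Pp at *; omega

lemma step4 (a b c d : ℕ) (hp : Pp a b c d) : ¬ Pp a b (c + 1) (d + 1) := by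
  unfold Pp at *; omega

lemma key_lemma (a b c d : ℕ) (hnp : ¬ Pp a b c d) :
    (0 < a ∧ Pp (a - 1) b c d) ∨
    (0 < a ∧ 0 < b ∧ Pp (a - 1) (b - 1) c d) ∨
    (0 < b ∧ 0 < c ∧ Pp a (b - 1) (c - 1) d) ∨
    (0 < c ∧ 0 < d ∧ Pp a b (c - 1) (d - 1)) := by
  unfold Pp at hnp
  by_cases hr : c < b + d
  · by_cases ha : 0 < a
    · exact Or.inl ⟨ha, by unfold Pp; omega⟩
    · by_cases hb : 0 < b
      · exact Or.inr (Or.inr (Or.inl ⟨hb, by omega, by unfold Pp; omega⟩))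
      · exact Or.inr (Or.inr (Or.inr ⟨by omega, by omega, by unfold Pp; omega⟩))
  · by_cases ha2 : a % 2 = 0 <;> by_cases hb2 : b % 2 = 0 <;> by_cases hd2 : d % 2 = 0
    · -- (E,E,E) : contradiction with hnp
      exact absurd (by omega) hnp
    · -- (E,E,O) : move 4
      exact Or.inr (Or.inr (Or.inr ⟨by omega, by omega, by unfold Pp; omega⟩))
    · -- (E,O,E) : move 3
      exact Or.inr (Or.inr (Or.inl ⟨by omega, by omega, by unfold Pp; omega⟩))
    · -- (E,O,O) : here ¬(a < b), so b < a; move 2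
      exact Or.inr (Or.inl ⟨by omega, by omega, by unfold Pp; omega⟩)
    · -- (O,E,E) : here ¬(b < a), so a < b; move 1
      exact Or.inl ⟨by omega, by unfold Pp; omega⟩
    · -- (O,E,O) : here ¬(b < a), so a < b; move 2
      exact Or.inr (Or.inl ⟨by omega, by omega, by unfold Pp; omega⟩)
    · -- (O,O,E) : move 2
      exact Or.inr (Or.inl ⟨by omega, by omega, by unfold Pp; omega⟩)
    · -- (O,O,O) : split on a < b
      by_cases hab : a < b
      · exact Or.inl ⟨by omega, by unfold Pp; omega⟩
      · exact Or.inr (Or.inr (Or.inl ⟨by omega, by omega, by unfold Pp; omega⟩))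

lemma main : ∀ n a b c d, a + b + c + d ≤ n → (isN (a, b, c, d) ↔ ¬ Pp a b c d) := by
  intro n
  induction n with
  | zero =>
    intro a b c d h
    obtain ⟨rfl, rfl, rfl, rfl⟩ : a = 0 ∧ b = 0 ∧ c = 0 ∧ d = 0 := by omega
    rw [isN_iff']
    have hP : Pp 0 0 0 0 := by unfold Pp; omega
    simp [hP]
  | succ n ih =>
    intro a b c d h
    rw [isN_iff']
    have e1 : 0 < a → (isN (a - 1, b, c, d) ↔ ¬ Pp (a - 1) b c d) :=
      fun h1 => ih _ _ _ _ (by omega)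
    have e2 : 0 < a → 0 < b → (isN (a - 1, b - 1, c, d) ↔ ¬ Pp (a - 1) (b - 1) c d) :=
      fun h1 _ => ih _ _ _ _ (by omega)
    have e3 : 0 < b → 0 < c → (isN (a, b - 1, c - 1, d) ↔ ¬ Pp a (b - 1) (c - 1) d) :=
      fun h1 _ => ih _ _ _ _ (by omega)
    have e4 : 0 < c → 0 < d → (isN (a, b, c - 1, d - 1) ↔ ¬ Pp a b (c - 1) (d - 1)) :=
      fun h1 _ => ih _ _ _ _ (by omega)
    constructor
    · rintro (⟨h1, hN⟩ | ⟨h1, h2, hN⟩ | ⟨h1, h2, hN⟩ | ⟨h1, h2, hN⟩)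
      · have hp : Pp (a - 1) b c d := not_not.mp fun hnp => hN ((e1 h1).mpr hnp)
        intro hP
        obtain ⟨a', rfl⟩ : ∃ a', a = a' + 1 := ⟨a - 1, by omega⟩
        exact step1 a' b c d (by simpa using hp) hP
      · have hp : Pp (a - 1) (b - 1) c d := not_not.mp fun hnp => hN ((e2 h1 h2).mpr hnp)
        intro hP
        obtain ⟨a', rfl⟩ : ∃ a', a = a' + 1 := ⟨a - 1, by omega⟩
        obtain ⟨b', rfl⟩ : ∃ b', b = b' + 1 := ⟨b - 1, by omega⟩
        exact step2 a' b' c d (by simpa using hp) hP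
      · have hp : Pp a (b - 1) (c - 1) d := not_not.mp fun hnp => hN ((e3 h1 h2).mpr hnp)
        intro hP
        obtain ⟨b', rfl⟩ : ∃ b', b = b' + 1 := ⟨b - 1, by omega⟩
        obtain ⟨c', rfl⟩ : ∃ c', c = c' + 1 := ⟨c - 1, by omega⟩
        exact step3 a b' c' d (by simpa using hp) hP
      · have hp : Pp a b (c - 1) (d - 1) := not_not.mp fun hnp => hN ((e4 h1 h2).mpr hnp)
        intro hP
        obtain ⟨c', rfl⟩ : ∃ c', c = c' + 1 := ⟨c - 1, by omega⟩
        obtain ⟨d', rfl⟩ : ∃ d', d = d' + 1 := ⟨d - 1, by omega⟩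
        exact step4 a b c' d' (by simpa using hp) hP
    · intro hnp
      rcases key_lemma a b c d hnp with ⟨h1, hp⟩ | ⟨h1, h2, hp⟩ | ⟨h1, h2, hp⟩ | ⟨h1, h2, hp⟩
      · exact Or.inl ⟨h1, fun hN => (e1 h1).mp hN hp⟩
      · exact Or.inr (Or.inl ⟨h1, h2, fun hN => (e2 h1 h2).mp hN hp⟩)
      · exact Or.inr (Or.inr (Or.inl ⟨h1, h2, fun hN => (e3 h1 h2).mp hN hp⟩))
      · exact Or.inr (Or.inr (Or.inr ⟨h1, h2, fun hN => (e4 h1 h2).mp hN hp⟩))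

/-- On positions `(a,b,c,d)` with `c < b + d`, the path-with-loop game is a
P-position iff `a + c` is even. -/
theorem path_P_iff (a b c d : ℕ) (h : c < b + d) :
    ¬ isN (a, b, c, d) ↔ Even (a + c) := by
  have hm := main (a + b + c + d) a b c d le_rfl
  rw [Nat.even_iff]
  constructor
  · intro hn
    have hp : Pp a b c d := not_not.mp fun hnp => hn (hm.mpr hnp)
    unfold Pp at hp; omega
  · intro he hn
    exact hm.mp hn (by unfold Pp; omega)
end

section
/- For every natural number n there exists a position of the game WAK (equivalently, an impartial game built from WAK positions) whose Grundy value is at least n; i.e., the Grundy values of WAK are unbounded. Concretely, define games G₁, G₂, ... recursively by: G₁ is a single looped vertex with weight 1, and G_{n+1} consists of a looped vertex u_{n+1} of weight 1 connected to the distinguished vertex of one copy of each G_i (i ≤ n), together with a second disjoint copy of each G_i. Then the Grundy values of G₁, G₂, ... are pairwise distinct. -/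
/-- The moves of Weighted Arc Kayles on a graph with edge relation `E` (loops allowed:
`E u u`) from the weight function `w`: choose an edge `(u,v)` with both endpoints of
positive weight and remove one counter from each endpoint (one counter in total from
the unique endpoint if `u = v` is a loop). -/
def wakMoves {V : Type*} [DecidableEq V] (E : V → V → Prop) (w : V → ℕ) :
    Set (V → ℕ) :=
  {w' | ∃ u v, E u v ∧ 0 < w u ∧ 0 < w v ∧
    w' = fun x => w x - (if x = u ∨ x = v then 1 else 0)}

lemma wakMoves_sum_lt {V : Type*} [Fintype V] [DecidableEq V] (E : V → V → Prop)
    (w : V → ℕ) {w' : V → ℕ} (h : w' ∈ wakMoves E w) :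
    ∑ x, w' x < ∑ x, w x := by
  obtain ⟨u, v, _, hu, _, rfl⟩ := h
  refine Finset.sum_lt_sum (fun i _ => Nat.sub_le _ _) ⟨u, Finset.mem_univ u, ?_⟩
  simp only [true_or, if_pos]
  omega

/-- The Grundy value of Weighted Arc Kayles on the graph with edge relation `E`
and weight function `w`: the mex of the Grundy values of the options. -/
noncomputable def wakGrundy {V : Type*} [Fintype V] [DecidableEq V]
    (E : V → V → Prop) : (V → ℕ) → ℕ := fun w =>
  mex (Set.range fun w' : {w' // w' ∈ wakMoves E w} => wakGrundy E w'.1)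
termination_by w => ∑ x, w x
decreasing_by exact wakMoves_sum_lt E _ w'.2


section Basics
variable {V : Type*} [Fintype V] [DecidableEq V] {E : V → V → Prop} {w w' : V → ℕ}

lemma wakMoves_finite (E : V → V → Prop) (w : V → ℕ) : (wakMoves E w).Finite := by
  apply (Set.finite_range (fun p : V × V => fun x => w x - (if x = p.1 ∨ x = p.2 then 1 else 0))).subset
  rintro _ ⟨u, v, _, _, _, rfl⟩
  exact ⟨(u, v), rfl⟩

lemma wakGrundy_def (E : V → V → Prop) (w : V → ℕ) :
    wakGrundy E w = mex (wakGrundy E '' wakMoves E w) := by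
  rw [wakGrundy]
  congr 1
  exact (Set.image_eq_range _ _).symm

lemma mex_notMem {s : Set ℕ} (hs : s.Finite) : mex s ∉ s :=
  Nat.sInf_mem (hs.infinite_compl.nonempty)

lemma mem_of_lt_mex {s : Set ℕ} {k : ℕ} (h : k < mex s) : k ∈ s := by
  by_contra hk
  exact absurd (Nat.sInf_le hk) (not_le.2 h)

lemma mex_eq {s : Set ℕ} {m : ℕ} (h1 : ∀ k < m, k ∈ s) (h2 : m ∉ s) : mex s = m := by
  refine le_antisymm (Nat.sInf_le h2) ?_
  by_contra hlt
  push_neg at hlt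
  have := Nat.sInf_mem (⟨m, h2⟩ : Set.Nonempty {n | n ∉ s})
  exact this (h1 _ hlt)

lemma grundy_move_ne (h : w' ∈ wakMoves E w) : wakGrundy E w' ≠ wakGrundy E w := by
  intro he
  have hmem : wakGrundy E w ∈ wakGrundy E '' wakMoves E w := ⟨w', h, he⟩
  rw [wakGrundy_def E w] at hmem
  exact mex_notMem ((wakMoves_finite E w).image _) hmem

lemma exists_move_of_lt {k : ℕ} (h : k < wakGrundy E w) :
    ∃ w' ∈ wakMoves E w, wakGrundy E w' = k := by
  rw [wakGrundy_def] at h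
  exact mem_of_lt_mex h

lemma grundy_eq {m : ℕ} (h1 : ∀ k < m, ∃ w' ∈ wakMoves E w, wakGrundy E w' = k)
    (h2 : ∀ w' ∈ wakMoves E w, wakGrundy E w' ≠ m) : wakGrundy E w = m := by
  rw [wakGrundy_def]
  refine mex_eq (fun k hk => ?_) ?_
  · obtain ⟨w', hw', hg⟩ := h1 k hk
    exact ⟨w', hw', hg⟩
  · rintro ⟨w', hw', hg⟩
    exact h2 w' hw' hg

lemma grundy_zero_of_dead (h : ∀ x, w x = 0) : wakGrundy E w = 0 := by
  refine grundy_eq (fun k hk => absurd hk (by omega)) ?_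
  rintro w' ⟨u, v, _, hu, _, _⟩
  rw [h u] at hu
  exact absurd hu (lt_irrefl 0)

end Basics

section Pairing
variable {V : Type*} [Fintype V] [DecidableEq V] {E : V → V → Prop}

/-- decrement both endpoints -/
def dec [DecidableEq V] (w : V → ℕ) (u v : V) : V → ℕ :=
  fun x => w x - (if x = u ∨ x = v then 1 else 0)

lemma dec_mem {w : V → ℕ} {u v : V} (hE : E u v) (hu : 0 < w u) (hv : 0 < w v) :
    dec w u v ∈ wakMoves E w := ⟨u, v, hE, hu, hv, rfl⟩

lemma mem_iff_dec {w w' : V → ℕ} :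
    w' ∈ wakMoves E w ↔ ∃ u v, E u v ∧ 0 < w u ∧ 0 < w v ∧ w' = dec w u v := Iff.rfl

lemma pairing_invisible (E : V → V → Prop) (σ : V → V) :
    ∀ (N : ℕ) (w : V → ℕ), ∑ x, w x ≤ N →
    (∀ x, σ (σ x) = x) →
    (∀ x, w (σ x) = w x) →
    (∀ u v, E u v → 0 < w u → 0 < w v → σ u ≠ u → σ v ≠ v → E (σ u) (σ v)) →
    (∀ u v, E u v → 0 < w u → 0 < w v → (σ u = u ↔ σ v = v)) →
    (∀ u, 0 < w u → σ u ≠ u → ¬ E u (σ u)) →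
    wakGrundy E w = wakGrundy E (fun x => if σ x = x then w x else 0) := by
  intro N
  induction N with
  | zero =>
    intro w hw _ _ _ _ _
    have hz : ∀ x, w x = 0 := by
      intro x
      have := Finset.single_le_sum (f := w) (fun i _ => Nat.zero_le _) (Finset.mem_univ x)
      omega
    rw [grundy_zero_of_dead hz, grundy_zero_of_dead (w := fun x => if σ x = x then w x else 0)
      (fun x => by simp [hz x])]
  | succ N ih =>
    intro w hw hinvol hwσ hcompat hmixed hmirror
    have hσu : ∀ {a b : V}, σ a = b ↔ a = σ b := by
      intro a b
      constructor
      · rintro rfl; rw [hinvol]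
      · rintro rfl; rw [hinvol]
    set wF : V → ℕ := fun x => if σ x = x then w x else 0 with hwF
    -- a move of w at fixed live (u,v) corresponds to a move of wF and the
    -- "invisible" reductions agree
    have key : ∀ u v : V, σ u = u → σ v = v →
        (fun x => if σ x = x then dec w u v x else 0) = dec wF u v := by
      intro u v hu hv
      funext x
      by_cases hx : σ x = x
      · simp [dec, hwF, hx]
      · simp only [if_neg hx, dec, hwF, if_neg hx, Nat.zero_sub]
    have sum_dec : ∀ (w0 : V → ℕ) (u v : V), ∑ x, dec w0 u v x ≤ ∑ x, w0 x := by
      intro w0 u v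
      exact Finset.sum_le_sum (fun i _ => Nat.sub_le _ _)
    -- hypotheses of IH for the position after moves whose weight is pointwise ≤ w
    have hyps_le : ∀ w1 : V → ℕ, (∀ x, w1 x ≤ w x) →
        ((∀ u v, E u v → 0 < w1 u → 0 < w1 v → σ u ≠ u → σ v ≠ v → E (σ u) (σ v)) ∧
         (∀ u v, E u v → 0 < w1 u → 0 < w1 v → (σ u = u ↔ σ v = v)) ∧
         (∀ u, 0 < w1 u → σ u ≠ u → ¬ E u (σ u))) := by
      intro w1 hle
      refine ⟨fun u v h hu hv => hcompat u v h (lt_of_lt_of_le hu (hle u)) (lt_of_lt_of_le hv (hle v)),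
        fun u v h hu hv => hmixed u v h (lt_of_lt_of_le hu (hle u)) (lt_of_lt_of_le hv (hle v)),
        fun u hu => hmirror u (lt_of_lt_of_le hu (hle u))⟩
    refine grundy_eq ?_ ?_
    · -- every value k < wakGrundy E wF is realized by a move of w
      intro k hk
      obtain ⟨w1F, hw1F, hg⟩ := exists_move_of_lt hk
      obtain ⟨u, v, hE, hu, hv, rfl⟩ := mem_iff_dec.1 hw1F
      have hσuu : σ u = u := by
        by_contra h; simp only [hwF, if_neg h] at hu; omega
      have hσvv : σ v = v := by
        by_contra h; simp only [hwF, if_neg h] at hv; omega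
      have hwu : 0 < w u := by simpa only [hwF, if_pos hσuu] using hu
      have hwv : 0 < w v := by simpa only [hwF, if_pos hσvv] using hv
      refine ⟨dec w u v, dec_mem hE hwu hwv, ?_⟩
      have hle : ∀ x, dec w u v x ≤ w x := fun x => Nat.sub_le _ _
      have hsum : ∑ x, dec w u v x ≤ N := by
        have := wakMoves_sum_lt E w (dec_mem hE hwu hwv)
        omega
      have hinv1 : ∀ x, dec w u v (σ x) = dec w u v x := by
        intro x
        simp only [dec, hwσ]
        congr 1
        by_cases hx1 : x = u
        · simp [hx1, hσuu]
        · by_cases hx2 : x = v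
          · simp [hx2, hσvv]
          · have : ¬(σ x = u ∨ σ x = v) := by
              rintro (h | h)
              · exact hx1 (by rwa [hσu, ← hσuu, hinvol] at h)
              · exact hx2 (by rwa [hσu, ← hσvv, hinvol] at h)
            simp [this, hx1, hx2]
      obtain ⟨h3, h4, h5⟩ := hyps_le (dec w u v) hle
      rw [ih (dec w u v) hsum hinvol hinv1 h3 h4 h5, key u v hσuu hσvv]
      exact hg
    · -- no move of w has value wakGrundy E wF
      rintro w1 hw1
      obtain ⟨u, v, hE, hu, hv, rfl⟩ := mem_iff_dec.1 hw1
      have hle : ∀ x, dec w u v x ≤ w x := fun x => Nat.sub_le _ _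
      have hsum1 : ∑ x, dec w u v x ≤ N := by
        have := wakMoves_sum_lt E w (dec_mem hE hu hv)
        omega
      obtain ⟨h3, h4, h5⟩ := hyps_le (dec w u v) hle
      by_cases hfix : σ u = u
      · -- fixed move: corresponds to a move of wF
        have hσvv : σ v = v := (hmixed u v hE hu hv).1 hfix
        have hinv1 : ∀ x, dec w u v (σ x) = dec w u v x := by
          intro x
          simp only [dec, hwσ]
          congr 1
          by_cases hx1 : x = u
          · simp [hx1, hfix]
          · by_cases hx2 : x = v
            · simp [hx2, hσvv]
            · have : ¬(σ x = u ∨ σ x = v) := by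
                rintro (h | h)
                · exact hx1 (by rwa [hσu, ← hfix, hinvol] at h)
                · exact hx2 (by rwa [hσu, ← hσvv, hinvol] at h)
              simp [this, hx1, hx2]
        rw [ih (dec w u v) hsum1 hinvol hinv1 h3 h4 h5, key u v hfix hσvv]
        have huF : 0 < wF u := by simpa only [hwF, if_pos hfix] using hu
        have hvF : 0 < wF v := by simpa only [hwF, if_pos hσvv] using hv
        exact grundy_move_ne (dec_mem hE huF hvF)
      · -- moving move: mirror it
        have hσvv : σ v ≠ v := fun h => hfix ((hmixed u v hE hu hv).2 h)
        have hσu_ne_v : σ u ≠ v := by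
          intro h
          exact hmirror u hu hfix (h ▸ hE)
        have hσv_ne_u : σ v ≠ u := by
          intro h
          apply hσu_ne_v
          rw [← h]
          exact hinvol v
        have hw1σu : 0 < dec w u v (σ u) := by
          have : ¬(σ u = u ∨ σ u = v) := by rintro (h | h) <;> [exact hfix h; exact hσu_ne_v h]
          simp only [dec, if_neg this, Nat.sub_zero, hwσ]
          exact hu
        have hw1σv : 0 < dec w u v (σ v) := by
          have : ¬(σ v = u ∨ σ v = v) := by rintro (h | h) <;> [exact hσv_ne_u h; exact hσvv h]
          simp only [dec, if_neg this, Nat.sub_zero, hwσ]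
          exact hv
        have hEσ : E (σ u) (σ v) := hcompat u v hE hu hv hfix hσvv
        set w2 := dec (dec w u v) (σ u) (σ v) with hw2
        have hw2mem : w2 ∈ wakMoves E (dec w u v) := dec_mem hEσ hw1σu hw1σv
        have hsum2 : ∑ x, w2 x ≤ N := le_trans (sum_dec _ _ _) hsum1
        have hle2 : ∀ x, w2 x ≤ w x := fun x => le_trans (Nat.sub_le _ _) (hle x)
        obtain ⟨h3', h4', h5'⟩ := hyps_le w2 hle2
        have hinv2 : ∀ x, w2 (σ x) = w2 x := by
          intro x
          simp only [hw2, dec, hwσ]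
          have e1 : (σ x = u ∨ σ x = v) ↔ (x = σ u ∨ x = σ v) := by
            constructor
            · rintro (h | h)
              · exact Or.inl (hσu.1 h)
              · exact Or.inr (hσu.1 h)
            · rintro (h | h)
              · exact Or.inl (by rw [h, hinvol])
              · exact Or.inr (by rw [h, hinvol])
          have e2 : (σ x = σ u ∨ σ x = σ v) ↔ (x = u ∨ x = v) := by
            constructor
            · rintro (h | h)
              · exact Or.inl (by rw [hσu, hinvol] at h; exact h)
              · exact Or.inr (by rw [hσu, hinvol] at h; exact h)
            · rintro (h | h) <;> simp [h]
          rw [if_congr e1 rfl rfl, if_congr e2 rfl rfl]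
          -- now: w x - ite (x = σu ∨ x = σv) - ite (x = u ∨ x = v)
          --    = w x - ite (x = u ∨ x = v) - ite (x = σu ∨ x = σv)
          omega
        have hgw2 : wakGrundy E w2 = wakGrundy E wF := by
          rw [ih w2 hsum2 hinvol hinv2 h3' h4' h5']
          congr 1
          funext x
          by_cases hx : σ x = x
          · simp only [if_pos hx, hwF, if_pos hx]
            have hxu : ¬(x = u ∨ x = v) := by
              rintro (rfl | rfl) <;> [exact hfix hx; exact hσvv hx]
            have hxσ : ¬(x = σ u ∨ x = σ v) := by
              rintro (rfl | rfl)
              · rw [hinvol] at hx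
                exact hfix hx.symm
              · rw [hinvol] at hx
                exact hσvv hx.symm
            simp only [hw2, dec, if_neg hxu, if_neg hxσ, Nat.sub_zero]
          · simp [hx, hwF]
        intro hcontra
        exact grundy_move_ne hw2mem (hgw2.trans hcontra.symm)
end Pairing

section Embed
variable {V₁ V₂ : Type*} [Fintype V₁] [DecidableEq V₁] [Fintype V₂] [DecidableEq V₂]

lemma wakGrundy_embed (E₁ : V₁ → V₁ → Prop) (E₂ : V₂ → V₂ → Prop) (e : V₁ → V₂)
    (hinj : Function.Injective e) (hE : ∀ x y, E₂ (e x) (e y) ↔ E₁ x y) :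
    ∀ (N : ℕ) (w₁ : V₁ → ℕ) (w₂ : V₂ → ℕ), ∑ x, w₂ x ≤ N →
    (∀ x, w₂ (e x) = w₁ x) → (∀ z, (∀ x, e x ≠ z) → w₂ z = 0) →
    wakGrundy E₂ w₂ = wakGrundy E₁ w₁ := by
  intro N
  induction N with
  | zero =>
    intro w₁ w₂ hs hw hz
    have h2 : ∀ z, w₂ z = 0 := by
      intro z
      have := Finset.single_le_sum (f := w₂) (fun i _ => Nat.zero_le _) (Finset.mem_univ z)
      omega
    rw [grundy_zero_of_dead h2, grundy_zero_of_dead (fun x => by rw [← hw x, h2])]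
  | succ N ih =>
    intro w₁ w₂ hs hw hz
    -- pushforward of a move
    have push : ∀ x y : V₁, (∀ x', dec w₂ (e x) (e y) (e x') = dec w₁ x y x') ∧
        (∀ z, (∀ x', e x' ≠ z) → dec w₂ (e x) (e y) z = 0) := by
      intro x y
      constructor
      · intro x'
        simp only [dec, hw]
        congr 1
        have : (e x' = e x ∨ e x' = e y) ↔ (x' = x ∨ x' = y) := by
          constructor
          · rintro (h | h)
            · exact Or.inl (hinj h)
            · exact Or.inr (hinj h)
          · rintro (rfl | rfl) <;> simp
        rw [if_congr this rfl rfl]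
      · intro z hzz
        simp only [dec, hz z hzz, Nat.zero_sub]
    refine grundy_eq ?_ ?_
    · intro k hk
      obtain ⟨w₁', hw₁', hg⟩ := exists_move_of_lt hk
      obtain ⟨x, y, hExy, hx, hy, rfl⟩ := mem_iff_dec.1 hw₁'
      have hmem : dec w₂ (e x) (e y) ∈ wakMoves E₂ w₂ :=
        dec_mem ((hE x y).2 hExy) (by rw [hw]; exact hx) (by rw [hw]; exact hy)
      refine ⟨dec w₂ (e x) (e y), hmem, ?_⟩
      have hsum : ∑ z, dec w₂ (e x) (e y) z ≤ N := by
        have := wakMoves_sum_lt E₂ w₂ hmem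
        omega
      rw [ih (dec w₁ x y) _ hsum (push x y).1 (push x y).2]
      exact hg
    · rintro w₂' hw₂'
      obtain ⟨u, v, hEuv, hu, hv, rfl⟩ := mem_iff_dec.1 hw₂'
      obtain ⟨x, hx⟩ : ∃ x, e x = u := by
        by_contra h
        push_neg at h
        rw [hz u h] at hu
        exact absurd hu (lt_irrefl 0)
      obtain ⟨y, hy⟩ : ∃ y, e y = v := by
        by_contra h
        push_neg at h
        rw [hz v h] at hv
        exact absurd hv (lt_irrefl 0)
      subst hx hy
      have hmem : dec w₁ x y ∈ wakMoves E₁ w₁ :=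
        dec_mem ((hE x y).1 hEuv) (by rw [← hw]; exact hu) (by rw [← hw]; exact hv)
      have hsum : ∑ z, dec w₂ (e x) (e y) z ≤ N := by
        have := wakMoves_sum_lt E₂ w₂ (dec_mem hEuv hu hv)
        omega
      rw [ih (dec w₁ x y) _ hsum (push x y).1 (push x y).2]
      exact grundy_move_ne hmem

end Embed

section Family

/-- weight with the distinguished vertex zeroed out -/
def dz {V : Type*} [DecidableEq V] (w : V → ℕ) (u : V) : V → ℕ :=
  fun x => if x = u then 0 else w x

/-- A good WAK position: distinguished looped vertex `u` of weight 1 such that after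
playing the loop the rest is paired up by the involution `τ`. -/
structure IsGood {V : Type*} [DecidableEq V] (E : V → V → Prop) (w : V → ℕ)
    (u : V) (τ : V → V) : Prop where
  loop : E u u
  wu : w u = 1
  invol : ∀ x, τ (τ x) = x
  winv : ∀ x, dz w u (τ x) = dz w u x
  nofix : ∀ x, 0 < dz w u x → τ x ≠ x
  compat : ∀ x y, E x y → 0 < dz w u x → 0 < dz w u y → E (τ x) (τ y)
  nomirror : ∀ x, 0 < dz w u x → ¬ E x (τ x)

variable {V : Type} [Fintype V] [DecidableEq V]

/-- vertex set of the next game: a root, `m` attached copies, `m` free copies -/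
abbrev VX (m : ℕ) (V : Type) : Type := Unit ⊕ (Fin m × V) ⊕ (Fin m × V)

def EX (m : ℕ) (E : V → V → Prop) (u : Fin m → V) : VX m V → VX m V → Prop
  | .inl _, .inl _ => True
  | .inl _, .inr (.inl (k, x)) => x = u k
  | .inr (.inl (k, x)), .inl _ => x = u k
  | .inr (.inl (k, x)), .inr (.inl (l, y)) => k = l ∧ E x y
  | .inr (.inr (k, x)), .inr (.inr (l, y)) => k = l ∧ E x y
  | _, _ => False

/-- the weight of the new (combined) game -/
def wX (m : ℕ) (w : Fin m → V → ℕ) : VX m V → ℕ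
  | .inl _ => 1
  | .inr (.inl (k, x)) => w k x
  | .inr (.inr (k, x)) => w k x

/-- game `k` embedded in the free copy `k` -/
def wE (m : ℕ) (w : Fin m → V → ℕ) (k : Fin m) : VX m V → ℕ
  | .inr (.inr (l, x)) => if l = k then w k x else 0
  | _ => 0

/-- pairing for the new game after the loop at the root: swap the two sides -/
def tX (m : ℕ) : VX m V → VX m V
  | .inl z => .inl z
  | .inr (.inl p) => .inr (.inr p)
  | .inr (.inr p) => .inr (.inl p)

/-- pairing for embedded game `k` -/
def tE (m : ℕ) (τ : Fin m → V → V) (k : Fin m) : VX m V → VX m V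
  | .inr (.inr (l, x)) => .inr (.inr (l, if l = k then τ k x else x))
  | z => z

/-- pairing after the move `(root, attached uₖ)`: τₖ on attached copy k, swap the
other attached copies with the corresponding free copies, fix free copy k -/
def sX (m : ℕ) (τ : Fin m → V → V) (k : Fin m) : VX m V → VX m V
  | .inl z => .inl z
  | .inr (.inl (l, x)) => if l = k then .inr (.inl (l, τ k x)) else .inr (.inr (l, x))
  | .inr (.inr (l, x)) => if l = k then .inr (.inr (l, x)) else .inr (.inl (l, x))

variable {m : ℕ} {E : V → V → Prop} {w : Fin m → V → ℕ} {u : Fin m → V} {τ : Fin m → V → V}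

lemma EX_symm (hsym : Symmetric E) : Symmetric (EX m E u) := by
  rintro (a | ⟨k, x⟩ | ⟨k, x⟩) (b | ⟨l, y⟩ | ⟨l, y⟩) h <;>
    simp only [EX] at h ⊢ <;>
    first
      | trivial
      | exact h
      | exact h.elim
      | exact ⟨h.1.symm, hsym h.2⟩

lemma wE_grundy (k : Fin m) : wakGrundy (EX m E u) (wE m w k) = wakGrundy E (w k) := by
  refine wakGrundy_embed E (EX m E u) (fun x => Sum.inr (Sum.inr (k, x)))
    (fun a b h => by simpa using h) (fun x y => by simp [EX])
    (∑ z, wE m w k z) (w k) (wE m w k) (le_refl _) (fun x => by simp [wE]) ?_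
  rintro (z | ⟨l, x⟩ | ⟨l, x⟩) hz
  · simp [wE]
  · simp [wE]
  · simp only [wE]
    have : l ≠ k := fun h => hz x (by rw [h])
    simp [this]

section withGood

lemma dzE_root (k : Fin m) (z : Unit) :
    dz (wE m w k) (Sum.inr (Sum.inr (k, u k))) (Sum.inl z) = 0 := by simp [dz, wE]

lemma dzE_att (k : Fin m) (l : Fin m) (x : V) :
    dz (wE m w k) (Sum.inr (Sum.inr (k, u k))) (Sum.inr (Sum.inl (l, x))) = 0 := by
  simp [dz, wE]

lemma dzE_free (k : Fin m) (l : Fin m) (x : V) :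
    dz (wE m w k) (Sum.inr (Sum.inr (k, u k))) (Sum.inr (Sum.inr (l, x))) =
      if l = k then dz (w k) (u k) x else 0 := by
  by_cases hl : l = k
  · subst hl
    by_cases hx : x = u l
    · subst hx; simp [dz, wE]
    · simp [dz, wE, hx, Prod.ext_iff]
  · simp [dz, wE, hl, Prod.ext_iff]

lemma isGood_wE (k : Fin m) (hg : IsGood E (w k) (u k) (τ k)) :
    IsGood (EX m E u) (wE m w k) (Sum.inr (Sum.inr (k, u k))) (tE m τ k) := by
  constructor
  · simp [EX, hg.loop]
  · simp [wE, hg.wu]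
  · rintro (z | ⟨l, x⟩ | ⟨l, x⟩)
    · rfl
    · rfl
    · simp only [tE]
      by_cases hl : l = k
      · subst hl; simp [hg.invol]
      · simp [hl]
  · rintro (z | ⟨l, x⟩ | ⟨l, x⟩)
    · rfl
    · rfl
    · simp only [tE]
      rw [dzE_free k _ _, dzE_free k _ _]
      by_cases hl : l = k
      · subst hl; simpa using hg.winv x
      · simp [hl]
  · rintro (z | ⟨l, x⟩ | ⟨l, x⟩) hpos
    · rw [dzE_root] at hpos; exact absurd hpos (lt_irrefl 0)
    · rw [dzE_att] at hpos; exact absurd hpos (lt_irrefl 0)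
    · rw [dzE_free k _ _] at hpos
      by_cases hl : l = k
      · subst hl
        rw [if_pos rfl] at hpos
        simp only [tE, if_pos rfl]
        intro hcon
        apply hg.nofix x hpos
        simpa using hcon
      · rw [if_neg hl] at hpos; exact absurd hpos (lt_irrefl 0)
  · rintro (z | ⟨l, x⟩ | ⟨l, x⟩) (z' | ⟨l', y⟩ | ⟨l', y⟩) hE hx hy
    all_goals first
      | (rw [dzE_root] at hx; exact absurd hx (lt_irrefl 0))
      | (rw [dzE_att] at hx; exact absurd hx (lt_irrefl 0))
      | (rw [dzE_root] at hy; exact absurd hy (lt_irrefl 0))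
      | (rw [dzE_att] at hy; exact absurd hy (lt_irrefl 0))
      | skip
    rw [dzE_free k _ _] at hx hy
    simp only [EX] at hE
    obtain ⟨rfl, hExy⟩ := hE
    by_cases hl : l = k
    · subst hl
      rw [if_pos rfl] at hx hy
      simp only [tE, if_pos rfl]
      exact ⟨rfl, hg.compat x y hExy hx hy⟩
    · rw [if_neg hl] at hx; exact absurd hx (lt_irrefl 0)
  · rintro (z | ⟨l, x⟩ | ⟨l, x⟩) hpos
    · rw [dzE_root] at hpos; exact absurd hpos (lt_irrefl 0)
    · rw [dzE_att] at hpos; exact absurd hpos (lt_irrefl 0)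
    · rw [dzE_free k _ _] at hpos
      by_cases hl : l = k
      · subst hl
        rw [if_pos rfl] at hpos
        simp only [tE, if_pos rfl, EX]
        rintro ⟨-, hcon⟩
        exact hg.nomirror x hpos hcon
      · rw [if_neg hl] at hpos; exact absurd hpos (lt_irrefl 0)

end withGood

lemma dzX_root (z : Unit) : dz (wX m w) (Sum.inl ()) (Sum.inl z) = 0 := by simp [dz, wX]

lemma dzX_att (l : Fin m) (x : V) :
    dz (wX m w) (Sum.inl ()) (Sum.inr (Sum.inl (l, x))) = w l x := by simp [dz, wX]

lemma dzX_free (l : Fin m) (x : V) :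
    dz (wX m w) (Sum.inl ()) (Sum.inr (Sum.inr (l, x))) = w l x := by simp [dz, wX]

lemma isGood_wX :
    IsGood (EX m E u) (wX m w) (Sum.inl ()) (tX m) := by
  constructor
  · simp [EX]
  · simp [wX]
  · rintro (z | ⟨l, x⟩ | ⟨l, x⟩) <;> rfl
  · rintro (z | ⟨l, x⟩ | ⟨l, x⟩)
    · rfl
    · simp only [tX]; rw [dzX_att, dzX_free]
    · simp only [tX]; rw [dzX_att, dzX_free]
  · rintro (z | ⟨l, x⟩ | ⟨l, x⟩) hpos
    · rw [dzX_root] at hpos; exact absurd hpos (lt_irrefl 0)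
    · simp [tX]
    · simp [tX]
  · rintro (z | ⟨l, x⟩ | ⟨l, x⟩) (z' | ⟨l', y⟩ | ⟨l', y⟩) hE hx hy
    all_goals first
      | (rw [dzX_root] at hx; exact absurd hx (lt_irrefl 0))
      | (rw [dzX_root] at hy; exact absurd hy (lt_irrefl 0))
      | (exact hE.elim)
      | (simp only [tX]; exact hE)
  · rintro (z | ⟨l, x⟩ | ⟨l, x⟩) hpos
    · rw [dzX_root] at hpos; exact absurd hpos (lt_irrefl 0)
    · simp [tX, EX]
    · simp [tX, EX]

section Step

lemma w2_root (k : Fin m) (z : Unit) :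
    dec (wX m w) (Sum.inl ()) (Sum.inr (Sum.inl (k, u k))) (Sum.inl z) = 0 := by
  simp [dec, wX]

lemma w2_att (k : Fin m) (hwu : w k (u k) = 1) (l : Fin m) (x : V) :
    dec (wX m w) (Sum.inl ()) (Sum.inr (Sum.inl (k, u k))) (Sum.inr (Sum.inl (l, x))) =
      if l = k then dz (w k) (u k) x else w l x := by
  by_cases hl : l = k
  · subst hl
    by_cases hx : x = u l
    · subst hx; simp [dec, wX, dz, hwu]
    · simp [dec, wX, dz, hx, Prod.ext_iff]
  · simp [dec, wX, dz, hl, Prod.ext_iff]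

lemma w2_free (k : Fin m) (l : Fin m) (x : V) :
    dec (wX m w) (Sum.inl ()) (Sum.inr (Sum.inl (k, u k))) (Sum.inr (Sum.inr (l, x))) =
      w l x := by
  simp [dec, wX]

lemma step_move_grundy (hgood : ∀ k, IsGood E (w k) (u k) (τ k)) (k : Fin m) :
    wakGrundy (EX m E u) (dec (wX m w) (Sum.inl ()) (Sum.inr (Sum.inl (k, u k)))) =
      wakGrundy E (w k) := by
  have hg := hgood k
  set w₂ := dec (wX m w) (Sum.inl ()) (Sum.inr (Sum.inl (k, u k))) with hw₂
  have hroot : ∀ z : Unit, w₂ (Sum.inl z) = 0 := w2_root k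
  have hatt : ∀ (l : Fin m) (x : V), w₂ (Sum.inr (Sum.inl (l, x))) =
      if l = k then dz (w k) (u k) x else w l x := w2_att k hg.wu
  have hfree : ∀ (l : Fin m) (x : V), w₂ (Sum.inr (Sum.inr (l, x))) = w l x := w2_free k
  have hdzfix : ∀ x : V, τ k x = x → dz (w k) (u k) x = 0 := by
    intro x hx
    by_contra h
    exact hg.nofix x (Nat.pos_of_ne_zero h) hx
  have hsroot : ∀ z : Unit, sX m τ k (Sum.inl z) = Sum.inl z := fun z => rfl
  have hsattk : ∀ x : V, sX m τ k (Sum.inr (Sum.inl (k, x))) =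
      Sum.inr (Sum.inl (k, τ k x)) := by intro x; simp [sX]
  have hsatt : ∀ (l : Fin m) (x : V), l ≠ k → sX m τ k (Sum.inr (Sum.inl (l, x))) =
      Sum.inr (Sum.inr (l, x)) := by intro l x hl; simp [sX, hl]
  have hsfreek : ∀ x : V, sX m τ k (Sum.inr (Sum.inr (k, x))) =
      Sum.inr (Sum.inr (k, x)) := by intro x; simp [sX]
  have hsfree : ∀ (l : Fin m) (x : V), l ≠ k → sX m τ k (Sum.inr (Sum.inr (l, x))) =
      Sum.inr (Sum.inl (l, x)) := by intro l x hl; simp [sX, hl]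
  have key : wakGrundy (EX m E u) w₂ =
      wakGrundy (EX m E u) (fun z => if sX m τ k z = z then w₂ z else 0) := by
    refine pairing_invisible (EX m E u) (sX m τ k) (∑ z, w₂ z) w₂ (le_refl _) ?_ ?_ ?_ ?_ ?_
    · -- involution
      rintro (z | ⟨l, x⟩ | ⟨l, x⟩)
      · rfl
      · by_cases hl : l = k
        · subst hl; rw [hsattk, hsattk, hg.invol]
        · rw [hsatt l x hl, hsfree l x hl]
      · by_cases hl : l = k
        · subst hl; rw [hsfreek, hsfreek]
        · rw [hsfree l x hl, hsatt l x hl]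
    · -- weights invariant
      rintro (z | ⟨l, x⟩ | ⟨l, x⟩)
      · rfl
      · by_cases hl : l = k
        · subst hl
          rw [hsattk, hatt, hatt, if_pos rfl, if_pos rfl]
          exact hg.winv x
        · rw [hsatt l x hl, hfree, hatt, if_neg hl]
      · by_cases hl : l = k
        · subst hl; rw [hsfreek]
        · rw [hsfree l x hl, hatt, hfree, if_neg hl]
    · -- compat
      rintro (z | ⟨l, x⟩ | ⟨l, x⟩) (z' | ⟨l', y⟩ | ⟨l', y⟩) hE hx hy hσx hσy
      all_goals first
        | (rw [hroot] at hx; exact absurd hx (lt_irrefl 0))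
        | (rw [hroot] at hy; exact absurd hy (lt_irrefl 0))
        | (exact hE.elim)
        | skip
      · -- att-att
        obtain ⟨rfl, hExy⟩ := hE
        rw [hatt] at hx hy
        by_cases hl : l = k
        · subst hl
          rw [if_pos rfl] at hx hy
          rw [hsattk, hsattk]
          exact ⟨rfl, hg.compat x y hExy hx hy⟩
        · rw [hsatt l x hl, hsatt l y hl]
          exact ⟨rfl, hExy⟩
      · -- free-free
        obtain ⟨rfl, hExy⟩ := hE
        by_cases hl : l = k
        · subst hl
          exact absurd (hsfreek x) hσx
        · rw [hsfree l x hl, hsfree l y hl]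
          exact ⟨rfl, hExy⟩
    · -- mixed fixedness
      rintro (z | ⟨l, x⟩ | ⟨l, x⟩) (z' | ⟨l', y⟩ | ⟨l', y⟩) hE hx hy
      all_goals try (exact hE.elim)
      all_goals try (simp only [hroot] at hx; exact absurd hx (lt_irrefl 0))
      all_goals try (simp only [hroot] at hy; exact absurd hy (lt_irrefl 0))
      · -- att-att
        obtain ⟨rfl, hExy⟩ := hE
        rw [hatt] at hx hy
        by_cases hl : l = k
        · subst hl
          rw [if_pos rfl] at hx hy
          rw [hsattk, hsattk]
          constructor <;> intro hfix <;> exfalso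
          · exact hg.nofix x hx (by simpa using hfix)
          · exact hg.nofix y hy (by simpa using hfix)
        · rw [hsatt l x hl, hsatt l y hl]
          constructor <;> intro hfix <;> exact absurd hfix (by simp)
      · -- free-free
        obtain ⟨rfl, hExy⟩ := hE
        by_cases hl : l = k
        · subst hl
          rw [hsfreek, hsfreek]
          simp
        · rw [hsfree l x hl, hsfree l y hl]
          constructor <;> intro hfix <;> exact absurd hfix (by simp)
    · -- no mirror edges
      rintro (z | ⟨l, x⟩ | ⟨l, x⟩) hx hσx
      · rw [hroot] at hx; exact absurd hx (lt_irrefl 0)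
      · rw [hatt] at hx
        by_cases hl : l = k
        · subst hl
          rw [if_pos rfl] at hx
          rw [hsattk]
          simp only [EX]
          rintro ⟨-, hcon⟩
          exact hg.nomirror x hx hcon
        · rw [hsatt l x hl]
          simp [EX]
      · by_cases hl : l = k
        · subst hl
          exact absurd (hsfreek x) hσx
        · rw [hsfree l x hl]
          simp [EX]
  have hfixw : (fun z => if sX m τ k z = z then w₂ z else 0) = wE m w k := by
    funext z
    rcases z with z | ⟨l, x⟩ | ⟨l, x⟩
    · rw [if_pos (hsroot z), hroot]; rfl
    · by_cases hl : l = k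
      · subst hl
        by_cases hfix : τ l x = x
        · rw [if_pos (by rw [hsattk, hfix]), hatt, if_pos rfl, hdzfix x hfix]; rfl
        · rw [if_neg (by rw [hsattk]; simp [Prod.ext_iff, hfix])]; rfl
      · rw [if_neg (by rw [hsatt l x hl]; simp)]; rfl
    · by_cases hl : l = k
      · subst hl
        rw [if_pos (hsfreek x), hfree]
        simp [wE]
      · rw [if_neg (by rw [hsfree l x hl]; simp)]
        simp [wE, hl]
  rw [key, hfixw, wE_grundy]

lemma step_grundy_ne (hgood : ∀ k, IsGood E (w k) (u k) (τ k)) (k : Fin m) :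
    wakGrundy (EX m E u) (wX m w) ≠ wakGrundy E (w k) := by
  have hmem : dec (wX m w) (Sum.inl ()) (Sum.inr (Sum.inl (k, u k))) ∈
      wakMoves (EX m E u) (wX m w) := by
    refine dec_mem ?_ ?_ ?_
    · simp [EX]
    · simp [wX]
    · simp [wX, (hgood k).wu]
  have := grundy_move_ne hmem
  rw [step_move_grundy hgood k] at this
  exact fun hc => this hc.symm

end Step
end Family

theorem wak_family (n : ℕ) : ∃ (V : Type) (ft : Fintype V) (de : DecidableEq V)
    (E : V → V → Prop) (w : Fin (n + 1) → V → ℕ) (u : Fin (n + 1) → V)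
    (τ : Fin (n + 1) → V → V),
    Symmetric E ∧ (∀ k, @IsGood V de E (w k) (u k) (τ k)) ∧
      Function.Injective (fun k => @wakGrundy V ft de E (w k)) := by
  induction n with
  | zero =>
    refine ⟨Unit, inferInstance, inferInstance, fun _ _ => True, fun _ _ => 1,
      fun _ => (), fun _ => id, fun _ _ _ => trivial, ?_, fun a b _ => by omega⟩
    intro k
    constructor
    · trivial
    · rfl
    · intro x; rfl
    · intro x; rfl
    · intro x hx; simp [dz] at hx
    · intro x y _ hx _; simp [dz] at hx
    · intro x hx; simp [dz] at hx
  | succ n ih =>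
    obtain ⟨V, ft, de, E, w, u, τ, hsym, hgood, hinj⟩ := ih
    letI := ft; letI := de
    refine ⟨VX (n + 1) V, inferInstance, inferInstance, EX (n + 1) E u,
      Fin.lastCases (wX (n + 1) w) (fun k => wE (n + 1) w k),
      Fin.lastCases (Sum.inl ()) (fun k => Sum.inr (Sum.inr (k, u k))),
      Fin.lastCases (tX (n + 1)) (fun k => tE (n + 1) τ k),
      EX_symm hsym, ?_, ?_⟩
    · intro k
      induction k using Fin.lastCases with
      | last =>
        simp only [Fin.lastCases_last]
        exact isGood_wX
      | cast k =>
        simp only [Fin.lastCases_castSucc]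
        exact isGood_wE k (hgood k)
    · intro a b hab
      simp only at hab
      induction a using Fin.lastCases with
      | last =>
        induction b using Fin.lastCases with
        | last => rfl
        | cast b =>
          exfalso
          rw [Fin.lastCases_last, Fin.lastCases_castSucc, wE_grundy] at hab
          exact step_grundy_ne hgood b hab
      | cast a =>
        induction b using Fin.lastCases with
        | last =>
          exfalso
          rw [Fin.lastCases_last, Fin.lastCases_castSucc, wE_grundy] at hab
          exact step_grundy_ne hgood a hab.symm
        | cast b =>
          rw [Fin.lastCases_castSucc, Fin.lastCases_castSucc, wE_grundy, wE_grundy] at hab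
          exact congrArg Fin.castSucc (hinj hab)

theorem wakGrundy_unbounded' :
    ∀ n : ℕ, ∃ (V : Type) (hf : Fintype V) (hd : DecidableEq V)
      (E : V → V → Prop) (w : V → ℕ),
        Symmetric E ∧ n ≤ @wakGrundy V hf hd E w := by
  intro n
  obtain ⟨V, ft, de, E, w, u, τ, hsym, hgood, hinj⟩ := wak_family n
  letI := ft; letI := de
  have hex : ∃ k : Fin (n + 1), n ≤ wakGrundy E (w k) := by
    by_contra h
    push_neg at h
    have hinj2 : Function.Injective
        (fun k : Fin (n + 1) => (⟨wakGrundy E (w k), h k⟩ : Fin n)) := by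
      intro a b hab
      apply hinj
      simpa [Fin.ext_iff] using hab
    have := Fintype.card_le_of_injective _ hinj2
    simp at this
  obtain ⟨k, hk⟩ := hex
  exact ⟨V, ft, de, E, w k, hsym, hk⟩

/-- The Grundy values of Weighted Arc Kayles are unbounded: for every `n` there is a
WAK position (a finite graph, possibly with loops, with weighted vertices) whose
Grundy value is at least `n`. -/
theorem wakGrundy_unbounded :
    ∀ n : ℕ, ∃ (V : Type) (hf : Fintype V) (hd : DecidableEq V)
      (E : V → V → Prop) (w : V → ℕ),
        Symmetric E ∧ n ≤ @wakGrundy V hf hd E w :=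
  wakGrundy_unbounded'
end

section
/- Let G_n be the games from the unboundedness construction: G₁ is a single looped vertex of weight 1, and G_{n+1} has a fresh looped vertex u_{n+1} (weight 1) joined to the distinguished vertex u'_i of one copy G'_i of each G_i for i ≤ n, plus a disjoint second copy G''_i of each G_i. If for every i ≤ n playing the loop at u_i in G_i leads to a P-position, then playing the loop at u_{n+1} in G_{n+1} leads to a P-position, and for each i ≤ n the option of G_{n+1} obtained by playing the edge (u'_i, u_{n+1}) has Grundy value equal to Grundy(G_i); consequently Grundy(G_{n+1}) ≠ Grundy(G_i) for all i ≤ n. -/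
/-- The graph of the unboundedness construction: a fresh looped vertex `none`
(`u_{n+1}`, of weight 1) is joined to the distinguished vertex `u i` of the first copy
(`Bool` coordinate `false`) of each graph `(V i, E i)`, and a second disjoint copy
(`Bool` coordinate `true`) of each `(V i, E i)` is added. -/
def extGraph {n : ℕ} (V : Fin n → Type) (E : ∀ i, V i → V i → Prop) (u : ∀ i, V i) :
    Option (Σ i : Fin n, Bool × V i) → Option (Σ i : Fin n, Bool × V i) → Prop
  | none, none => True
  | none, some ⟨i, b, v⟩ => b = false ∧ v = u i
  | some ⟨i, b, v⟩, none => b = false ∧ v = u i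
  | some ⟨i, b, v⟩, some ⟨j, c, v'⟩ => ∃ h : i = j, b = c ∧ E j (h ▸ v) v'

/-- The weights of the unboundedness construction: the fresh vertex has weight 1 and
each copied vertex keeps its weight. -/
def extW {n : ℕ} {V : Fin n → Type} (w : ∀ i, V i → ℕ) :
    Option (Σ i : Fin n, Bool × V i) → ℕ
  | none => 1
  | some ⟨i, _, v⟩ => w i v
namespace WAKaux

lemma compl_setOf_not (S : Set ℕ) : Sᶜ = {n | n ∉ S} := rfl

lemma mex_not_mem {S : Set ℕ} (h : S.Finite) : mex S ∉ S := by
  have hne : {n | n ∉ S}.Nonempty := h.infinite_compl.nonempty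
  exact Nat.sInf_mem hne

lemma mex_eq_of {S : Set ℕ} {g : ℕ} (hg : g ∉ S) (h : ∀ k < g, k ∈ S) : mex S = g := by
  refine le_antisymm (Nat.sInf_le hg) (le_csInf ⟨g, hg⟩ ?_)
  intro m hm
  by_contra hlt
  exact hm (h m (not_le.1 hlt))

lemma optionSet_finite {V : Type*} [Fintype V] [DecidableEq V] (E : V → V → Prop) (w : V → ℕ) :
    (Set.range fun w' : {w' // w' ∈ wakMoves E w} => wakGrundy E w'.1).Finite := by
  have h : (wakMoves E w).Finite := by
    apply Set.Finite.subset (Set.finite_range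
      fun p : V × V => fun x => w x - if x = p.1 ∨ x = p.2 then 1 else 0)
    rintro _ ⟨a, b, -, -, -, rfl⟩
    exact ⟨(a, b), rfl⟩
  haveI := h.to_subtype
  exact Set.finite_range _

lemma grundy_ne_moves {V : Type*} [Fintype V] [DecidableEq V] (E : V → V → Prop) {w w' : V → ℕ}
    (h : w' ∈ wakMoves E w) : wakGrundy E w ≠ wakGrundy E w' := by
  conv_lhs => rw [wakGrundy]
  intro hEq
  exact mex_not_mem (optionSet_finite E w) (hEq ▸ ⟨⟨w', h⟩, rfl⟩)

lemma exists_move_grundy_lt {V : Type*} [Fintype V] [DecidableEq V] (E : V → V → Prop)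
    {w : V → ℕ} {k : ℕ} (h : k < wakGrundy E w) :
    ∃ w' ∈ wakMoves E w, wakGrundy E w' = k := by
  rw [wakGrundy] at h
  have hk : k ∈ Set.range fun w' : {w' // w' ∈ wakMoves E w} => wakGrundy E w'.1 := by
    by_contra hk
    exact absurd (Nat.sInf_le hk) (not_le.2 h)
  obtain ⟨⟨w', hm⟩, hkk⟩ := hk
  exact ⟨w', hm, hkk⟩

lemma grundy_eq_of {V : Type*} [Fintype V] [DecidableEq V] (E : V → V → Prop) {w : V → ℕ}
    {g : ℕ} (hne : ∀ w' ∈ wakMoves E w, wakGrundy E w' ≠ g)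
    (hlt : ∀ k < g, ∃ w' ∈ wakMoves E w, wakGrundy E w' = k) : wakGrundy E w = g := by
  rw [wakGrundy]
  refine mex_eq_of ?_ ?_
  · rintro ⟨⟨w', hm⟩, hk⟩
    exact hne w' hm hk
  · intro k hk
    obtain ⟨w', hm, he⟩ := hlt k hk
    exact ⟨⟨w', hm⟩, he⟩

end WAKaux
namespace WAKaux

variable {n : ℕ} {V : Fin n → Type} [∀ i, Fintype (V i)] [∀ i, DecidableEq (V i)]

/-- Restriction of a weight function on the extended graph to one block. -/
def blk (W : Option (Σ i : Fin n, Bool × V i) → ℕ) (i : Fin n) (b : Bool) : V i → ℕ :=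
  fun v => W (some ⟨i, (b, v)⟩)

/-- Replace the weights on one block. -/
def setBlk (W : Option (Σ i : Fin n, Bool × V i) → ℕ) (i : Fin n) (b : Bool)
    (g : V i → ℕ) : Option (Σ i : Fin n, Bool × V i) → ℕ := fun x =>
  match x with
  | none => W none
  | some ⟨j, (c, v)⟩ => if h : j = i ∧ c = b then g (h.1 ▸ v) else W (some ⟨j, (c, v)⟩)

@[simp] lemma setBlk_none (W : Option (Σ i : Fin n, Bool × V i) → ℕ) (i : Fin n) (b : Bool)
    (g : V i → ℕ) : setBlk W i b g none = W none := rfl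

@[simp] lemma blk_setBlk_same (W : Option (Σ i : Fin n, Bool × V i) → ℕ) (i : Fin n) (b : Bool)
    (g : V i → ℕ) : blk (setBlk W i b g) i b = g := by
  funext v
  simp [blk, setBlk]

lemma blk_setBlk_ne (W : Option (Σ i : Fin n, Bool × V i) → ℕ) (i : Fin n) (b : Bool)
    (g : V i → ℕ) (j : Fin n) (c : Bool) (h : j ≠ i ∨ c ≠ b) :
    blk (setBlk W i b g) j c = blk W j c := by
  funext v
  simp only [blk, setBlk]
  rw [dif_neg]
  rintro ⟨rfl, rfl⟩
  rcases h with h | h <;> exact h rfl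

end WAKaux
namespace WAKaux
set_option linter.unusedSectionVars false

variable {n : ℕ} {V : Fin n → Type} [∀ i, Fintype (V i)] [∀ i, DecidableEq (V i)]
  {E : ∀ i, V i → V i → Prop} {u : ∀ i, V i}

lemma moves_char (W : Option (Σ i : Fin n, Bool × V i) → ℕ) (h0 : W none = 0)
    (W' : Option (Σ i : Fin n, Bool × V i) → ℕ) :
    W' ∈ wakMoves (extGraph V E u) W ↔
      ∃ i b g, g ∈ wakMoves (E i) (blk W i b) ∧ W' = setBlk W i b g := by
  constructor
  · rintro ⟨x, y, hE, hx, hy, rfl⟩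
    match x, y with
    | none, _ => rw [h0] at hx; exact absurd hx (lt_irrefl 0)
    | some _, none => rw [h0] at hy; exact absurd hy (lt_irrefl 0)
    | some ⟨i, (b, p)⟩, some ⟨j, (c, q)⟩ =>
      obtain ⟨rfl, rfl, hE⟩ := hE
      refine ⟨i, b, fun v => blk W i b v - (if v = p ∨ v = q then 1 else 0),
        ⟨p, q, hE, hx, hy, rfl⟩, ?_⟩
      funext x
      match x with
      | none => simp [setBlk]
      | some ⟨j', (c', v)⟩ =>
        simp only [setBlk]
        by_cases hj : j' = i
        · subst hj
          by_cases hc : c' = b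
          · subst hc
            rw [dif_pos ⟨rfl, rfl⟩]
            simp [blk]
          · rw [dif_neg (fun h => hc h.2)]
            have h1 : (some ⟨j', (c', v)⟩ : Option (Σ i : Fin n, Bool × V i)) ≠ some ⟨j', (b, p)⟩ := by
              simp [hc]
            have h2 : (some ⟨j', (c', v)⟩ : Option (Σ i : Fin n, Bool × V i)) ≠ some ⟨j', (b, q)⟩ := by
              simp [hc]
            simp [h1, h2]
        · rw [dif_neg (fun h => hj h.1)]
          have h1 : (some ⟨j', (c', v)⟩ : Option (Σ i : Fin n, Bool × V i)) ≠ some ⟨i, (b, p)⟩ := by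
            simp [hj]
          have h2 : (some ⟨j', (c', v)⟩ : Option (Σ i : Fin n, Bool × V i)) ≠ some ⟨i, (b, q)⟩ := by
            simp [hj]
          simp [h1, h2]
  · rintro ⟨i, b, g, ⟨p, q, hE, hp, hq, rfl⟩, rfl⟩
    refine ⟨some ⟨i, (b, p)⟩, some ⟨i, (b, q)⟩, ⟨rfl, rfl, hE⟩, hp, hq, ?_⟩
    funext x
    match x with
    | none => simp [setBlk]
    | some ⟨j', (c', v)⟩ =>
      simp only [setBlk]
      by_cases hj : j' = i
      · subst hj
        by_cases hc : c' = b
        · subst hc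
          rw [dif_pos ⟨rfl, rfl⟩]
          simp [blk]
        · rw [dif_neg (fun h => hc h.2)]
          have h1 : (some ⟨j', (c', v)⟩ : Option (Σ i : Fin n, Bool × V i)) ≠ some ⟨j', (b, p)⟩ := by
            simp [hc]
          have h2 : (some ⟨j', (c', v)⟩ : Option (Σ i : Fin n, Bool × V i)) ≠ some ⟨j', (b, q)⟩ := by
            simp [hc]
          simp [h1, h2]
      · rw [dif_neg (fun h => hj h.1)]
        have h1 : (some ⟨j', (c', v)⟩ : Option (Σ i : Fin n, Bool × V i)) ≠ some ⟨i, (b, p)⟩ := by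
          simp [hj]
        have h2 : (some ⟨j', (c', v)⟩ : Option (Σ i : Fin n, Bool × V i)) ≠ some ⟨i, (b, q)⟩ := by
          simp [hj]
        simp [h1, h2]

end WAKaux
namespace WAKaux
set_option linter.unusedSectionVars false

lemma bnot_ne (b : Bool) : (!b) ≠ b := by cases b <;> simp

variable {n : ℕ} {V : Fin n → Type} [∀ i, Fintype (V i)] [∀ i, DecidableEq (V i)]
  {E : ∀ i, V i → V i → Prop} {u : ∀ i, V i}

lemma factA (N : ℕ) : ∀ (W : Option (Σ i : Fin n, Bool × V i) → ℕ), ∑ x, W x ≤ N →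
    W none = 0 → (∀ i, blk W i false = blk W i true) →
    wakGrundy (extGraph V E u) W = 0 := by
  induction N using Nat.strong_induction_on with
  | _ N IH =>
    intro W hN h0 hs
    refine grundy_eq_of _ ?_ (by omega)
    intro W' hW' hg0
    obtain ⟨i, b, g, hg, rfl⟩ := (moves_char (E := E) (u := u) W h0 W').1 hW'
    have hsBool : ∀ j (c : Bool), blk W j c = blk W j (!c) := by
      intro j c
      cases c
      · exact hs j
      · exact (hs j).symm
    have hblk : blk (setBlk W i b g) i (!b) = blk W i b := by
      rw [blk_setBlk_ne W i b g i (!b) (Or.inr (bnot_ne b))]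
      exact (hsBool i b).symm
    have hg' : g ∈ wakMoves (E i) (blk (setBlk W i b g) i (!b)) := by rw [hblk]; exact hg
    have hmem : setBlk (setBlk W i b g) i (!b) g ∈ wakMoves (extGraph V E u) (setBlk W i b g) :=
      (moves_char (E := E) (u := u) _ (by simp [h0]) _).2 ⟨i, !b, g, hg', rfl⟩
    have hsum1 : ∑ x, setBlk W i b g x < ∑ x, W x := wakMoves_sum_lt _ _ hW'
    have hsum2 : ∑ x, setBlk (setBlk W i b g) i (!b) g x < ∑ x, setBlk W i b g x :=
      wakMoves_sum_lt _ _ hmem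
    have hGzero : wakGrundy (extGraph V E u) (setBlk (setBlk W i b g) i (!b) g) = 0 := by
      refine IH (∑ x, setBlk (setBlk W i b g) i (!b) g x) (by omega) _ le_rfl (by simp [h0]) ?_
      intro j
      by_cases hj : j = i
      · subst hj
        have key : ∀ c, blk (setBlk (setBlk W j b g) j (!b) g) j c = g := by
          intro c
          by_cases hc : c = b
          · subst hc
            rw [blk_setBlk_ne (setBlk W j c g) j (!c) g j c (Or.inr (bnot_ne c).symm)]
            exact blk_setBlk_same W j c g
          · have hcb : c = !b := (by decide : ∀ x y : Bool, x ≠ y → x = !y) c b hc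
            rw [hcb]
            exact blk_setBlk_same (setBlk W j b g) j (!b) g
        rw [key false, key true]
      · rw [blk_setBlk_ne (setBlk W i b g) i (!b) g j false (Or.inl hj),
          blk_setBlk_ne (setBlk W i b g) i (!b) g j true (Or.inl hj),
          blk_setBlk_ne W i b g j false (Or.inl hj),
          blk_setBlk_ne W i b g j true (Or.inl hj)]
        exact hs j
    exact grundy_ne_moves _ hmem (hg0.trans hGzero.symm)

end WAKaux
namespace WAKaux
set_option linter.unusedSectionVars false

variable {n : ℕ} {V : Fin n → Type} [∀ i, Fintype (V i)] [∀ i, DecidableEq (V i)]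
  {E : ∀ i, V i → V i → Prop} {u : ∀ i, V i}

lemma factB (N : ℕ) : ∀ (i : Fin n) (W : Option (Σ i : Fin n, Bool × V i) → ℕ),
    ∑ x, W x ≤ N → W none = 0 →
    (∀ j, j ≠ i → blk W j false = blk W j true) →
    wakGrundy (E i) (blk W i false) = 0 →
    wakGrundy (extGraph V E u) W = wakGrundy (E i) (blk W i true) := by
  induction N using Nat.strong_induction_on with
  | _ N IH =>
    intro i W hN h0 hs hP
    refine grundy_eq_of _ ?_ ?_
    · -- no option has Grundy value g0
      intro W' hW' hEq
      obtain ⟨j, b, g, hg, rfl⟩ := (moves_char (E := E) (u := u) W h0 W').1 hW'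
      have hsum1 : ∑ x, setBlk W j b g x < ∑ x, W x := wakMoves_sum_lt _ _ hW'
      by_cases hj : j = i
      · subst hj
        cases b
        · -- move in the P-block (j, false)
          have hgne : wakGrundy (E j) g ≠ 0 := fun h => grundy_ne_moves _ hg (hP.trans h.symm)
          obtain ⟨g', hg', hg'0⟩ := exists_move_grundy_lt (E j) (Nat.pos_of_ne_zero hgne)
          have hg'' : g' ∈ wakMoves (E j) (blk (setBlk W j false g) j false) := by
            rw [blk_setBlk_same]; exact hg'
          have hmem : setBlk (setBlk W j false g) j false g' ∈
              wakMoves (extGraph V E u) (setBlk W j false g) :=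
            (moves_char (E := E) (u := u) _ (by simp [h0]) _).2 ⟨j, false, g', hg'', rfl⟩
          have hsum2 : ∑ x, setBlk (setBlk W j false g) j false g' x <
              ∑ x, setBlk W j false g x := wakMoves_sum_lt _ _ hmem
          have hW''g : wakGrundy (extGraph V E u) (setBlk (setBlk W j false g) j false g') =
              wakGrundy (E j) (blk W j true) := by
            have := IH (∑ x, setBlk (setBlk W j false g) j false g' x) (by omega) j
              (setBlk (setBlk W j false g) j false g') le_rfl (by simp [h0]) ?_ ?_
            · rw [this, blk_setBlk_ne (setBlk W j false g) j false g' j true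
                (Or.inr (by simp)), blk_setBlk_ne W j false g j true (Or.inr (by simp))]
            · intro k hk
              rw [blk_setBlk_ne (setBlk W j false g) j false g' k false (Or.inl hk),
                blk_setBlk_ne (setBlk W j false g) j false g' k true (Or.inl hk),
                blk_setBlk_ne W j false g k false (Or.inl hk),
                blk_setBlk_ne W j false g k true (Or.inl hk)]
              exact hs k hk
            · rw [blk_setBlk_same]; exact hg'0
          exact grundy_ne_moves _ hmem (hEq.trans hW''g.symm)
        · -- move in the main block (j, true)
          have hW'g : wakGrundy (extGraph V E u) (setBlk W j true g) = wakGrundy (E j) g := by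
            have := IH (∑ x, setBlk W j true g x) (by omega) j (setBlk W j true g) le_rfl
              (by simp [h0]) ?_ ?_
            · rw [this, blk_setBlk_same]
            · intro k hk
              rw [blk_setBlk_ne W j true g k false (Or.inl hk),
                blk_setBlk_ne W j true g k true (Or.inl hk)]
              exact hs k hk
            · rw [blk_setBlk_ne W j true g j false (Or.inr (by simp))]; exact hP
          rw [hW'g] at hEq
          exact grundy_ne_moves _ hg hEq.symm
      · -- move in a block j ≠ i : mirror
        have hsBool : ∀ (c : Bool), blk W j c = blk W j (!c) := by
          intro c
          cases c
          · exact hs j hj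
          · exact (hs j hj).symm
        have hblk : blk (setBlk W j b g) j (!b) = blk W j b := by
          rw [blk_setBlk_ne W j b g j (!b) (Or.inr (bnot_ne b))]
          exact (hsBool b).symm
        have hg' : g ∈ wakMoves (E j) (blk (setBlk W j b g) j (!b)) := by rw [hblk]; exact hg
        have hmem : setBlk (setBlk W j b g) j (!b) g ∈
            wakMoves (extGraph V E u) (setBlk W j b g) :=
          (moves_char (E := E) (u := u) _ (by simp [h0]) _).2 ⟨j, !b, g, hg', rfl⟩
        have hsum2 : ∑ x, setBlk (setBlk W j b g) j (!b) g x < ∑ x, setBlk W j b g x :=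
          wakMoves_sum_lt _ _ hmem
        have hW''g : wakGrundy (extGraph V E u) (setBlk (setBlk W j b g) j (!b) g) =
            wakGrundy (E i) (blk W i true) := by
          have := IH (∑ x, setBlk (setBlk W j b g) j (!b) g x) (by omega) i
            (setBlk (setBlk W j b g) j (!b) g) le_rfl (by simp [h0]) ?_ ?_
          · rw [this, blk_setBlk_ne (setBlk W j b g) j (!b) g i true (Or.inl (Ne.symm hj)),
              blk_setBlk_ne W j b g i true (Or.inl (Ne.symm hj))]
          · intro k hk
            by_cases hkj : k = j
            · subst hkj
              have key : ∀ c, blk (setBlk (setBlk W k b g) k (!b) g) k c = g := by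
                intro c
                by_cases hc : c = b
                · subst hc
                  rw [blk_setBlk_ne (setBlk W k c g) k (!c) g k c (Or.inr (bnot_ne c).symm)]
                  exact blk_setBlk_same W k c g
                · have hcb : c = !b := (by decide : ∀ x y : Bool, x ≠ y → x = !y) c b hc
                  rw [hcb]
                  exact blk_setBlk_same (setBlk W k b g) k (!b) g
              rw [key false, key true]
            · rw [blk_setBlk_ne (setBlk W j b g) j (!b) g k false (Or.inl hkj),
                blk_setBlk_ne (setBlk W j b g) j (!b) g k true (Or.inl hkj),
                blk_setBlk_ne W j b g k false (Or.inl hkj),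
                blk_setBlk_ne W j b g k true (Or.inl hkj)]
              exact hs k hk
          · rw [blk_setBlk_ne (setBlk W j b g) j (!b) g i false (Or.inl (Ne.symm hj)),
              blk_setBlk_ne W j b g i false (Or.inl (Ne.symm hj))]
            exact hP
        exact grundy_ne_moves _ hmem (hEq.trans hW''g.symm)
    · -- every value below g0 is attained
      intro k hk
      obtain ⟨g', hg', hg'k⟩ := exists_move_grundy_lt (E i) hk
      have hg'' : g' ∈ wakMoves (E i) (blk W i true) := hg'
      have hmem : setBlk W i true g' ∈ wakMoves (extGraph V E u) W :=
        (moves_char (E := E) (u := u) W h0 _).2 ⟨i, true, g', hg'', rfl⟩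
      have hsum1 : ∑ x, setBlk W i true g' x < ∑ x, W x := wakMoves_sum_lt _ _ hmem
      refine ⟨setBlk W i true g', hmem, ?_⟩
      have := IH (∑ x, setBlk W i true g' x) (by omega) i (setBlk W i true g') le_rfl
        (by simp [h0]) ?_ ?_
      · rw [this, blk_setBlk_same]; exact hg'k
      · intro j hj
        rw [blk_setBlk_ne W i true g' j false (Or.inl hj),
          blk_setBlk_ne W i true g' j true (Or.inl hj)]
        exact hs j hj
      · rw [blk_setBlk_ne W i true g' i false (Or.inr (by simp))]; exact hP

end WAKaux


/-- Induction step of the unboundedness construction.  Suppose each `G i = (V i, E i, w i)`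
has a distinguished looped vertex `u i` of weight 1 such that playing that loop leads to
a P-position.  Then in the extended game `G' = extGraph`:
(a) playing the loop at the fresh vertex `u_{n+1}` leads to a P-position;
(b) for each `i`, playing the edge `(u'_i, u_{n+1})` leads to a position of Grundy value
`Grundy (G i)`; and consequently
(c) `Grundy G' ≠ Grundy (G i)` for every `i`. -/
theorem wak_unbounded_step {n : ℕ} (V : Fin n → Type)
    [∀ i, Fintype (V i)] [∀ i, DecidableEq (V i)]
    (E : ∀ i, V i → V i → Prop) (hsymm : ∀ i, Symmetric (E i))
    (w : ∀ i, V i → ℕ) (u : ∀ i, V i)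
    (hw : ∀ i, w i (u i) = 1) (hloop : ∀ i, E i (u i) (u i))
    (hPloop : ∀ i,
      wakGrundy (E i) (fun x => w i x - (if x = u i then 1 else 0)) = 0) :
    (wakGrundy (extGraph V E u)
        (fun x => extW w x - (if x = none then 1 else 0)) = 0) ∧
    (∀ i : Fin n,
      wakGrundy (extGraph V E u)
        (fun x => extW w x -
          (if x = none ∨ x = some ⟨i, (false, u i)⟩ then 1 else 0)) =
      wakGrundy (E i) (w i)) ∧
    (∀ i : Fin n,
      wakGrundy (extGraph V E u) (extW w) ≠ wakGrundy (E i) (w i)) := by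
  have hb : ∀ i : Fin n,
      wakGrundy (extGraph V E u)
        (fun x => extW w x -
          (if x = none ∨ x = some ⟨i, (false, u i)⟩ then 1 else 0)) =
      wakGrundy (E i) (w i) := by
    intro i
    set W₁ : Option (Σ i : Fin n, Bool × V i) → ℕ := fun x => extW w x -
      (if x = none ∨ x = some ⟨i, (false, u i)⟩ then 1 else 0) with hW₁
    have hbt : WAKaux.blk W₁ i true = w i := by
      funext v
      have : (some ⟨i, (true, v)⟩ : Option (Σ i : Fin n, Bool × V i)) ≠
          some ⟨i, (false, u i)⟩ := by simp
      simp [WAKaux.blk, hW₁, extW, this]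
    have := WAKaux.factB (E := E) (u := u) (∑ x, W₁ x) i W₁ le_rfl ?_ ?_ ?_
    · rw [this, hbt]
    · simp [hW₁, extW]
    · intro j hj
      funext v
      have h1 : (some ⟨j, (false, v)⟩ : Option (Σ i : Fin n, Bool × V i)) ≠
          some ⟨i, (false, u i)⟩ := by simp [hj]
      have h2 : (some ⟨j, (true, v)⟩ : Option (Σ i : Fin n, Bool × V i)) ≠
          some ⟨i, (false, u i)⟩ := by simp [hj]
      simp [WAKaux.blk, hW₁, extW, h1, h2]
    · have : WAKaux.blk W₁ i false = fun x => w i x - (if x = u i then 1 else 0) := by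
        funext v
        have : ((some ⟨i, (false, v)⟩ : Option (Σ i : Fin n, Bool × V i)) =
            some ⟨i, (false, u i)⟩) ↔ v = u i := by simp
        simp only [WAKaux.blk, hW₁, extW, this]
        by_cases hv : v = u i <;> simp [hv]
      rw [this]
      exact hPloop i
  refine ⟨?_, hb, ?_⟩
  · set W₀ : Option (Σ i : Fin n, Bool × V i) → ℕ := fun x => extW w x -
      (if x = none then 1 else 0) with hW₀
    refine WAKaux.factA (E := E) (u := u) (∑ x, W₀ x) W₀ le_rfl (by simp [hW₀, extW]) ?_
    intro i
    funext v
    simp [WAKaux.blk, hW₀, extW]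
  · intro i
    have hmem : (fun x => extW w x -
        (if x = none ∨ x = some ⟨i, (false, u i)⟩ then 1 else 0)) ∈
        wakMoves (extGraph V E u) (extW w) := by
      refine ⟨none, some ⟨i, (false, u i)⟩, ⟨rfl, rfl⟩, ?_, ?_, rfl⟩
      · simp [extW]
      · simp [extW, hw i]
    have := WAKaux.grundy_ne_moves (extGraph V E u) hmem
    rw [hb i] at this
    exact this
end

section
/- In WAK, merging two false twins v₁ and v₂ (non-adjacent vertices with the same neighborhood and the same loop status) into a single vertex of weight ω(v₁) + ω(v₂) yields a game with the same Grundy value. -/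
section Aux

variable {V : Type} [DecidableEq V]

/-- The merged weight function. -/
def wmerge (v₁ v₂ : V) (w : V → ℕ) : {x : V // x ≠ v₂} → ℕ :=
  fun x => if x.1 = v₁ then w v₁ + w v₂ else w x.1

/-- Projection of a vertex onto the merged vertex set. -/
def wbar (v₁ : V) {v₂ : V} (hne : v₁ ≠ v₂) (a : V) : {x : V // x ≠ v₂} :=
  if h : a = v₂ then ⟨v₁, hne⟩ else ⟨a, h⟩

lemma wbar_iff (v₁ : V) {v₂ : V} (hne : v₁ ≠ v₂) (a x : V) (hx2 : x ≠ v₂) :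
    (⟨x, hx2⟩ : {x : V // x ≠ v₂}) = wbar v₁ hne a ↔ ((x = v₁ ∧ v₂ = a) ∨ x = a) := by
  unfold wbar
  split_ifs with h
  · subst h
    simp only [Subtype.ext_iff]
    tauto
  · simp only [Subtype.ext_iff]
    constructor
    · tauto
    · rintro (⟨h1, h2⟩ | h1)
      · exact absurd h2.symm h
      · exact h1

lemma wmerge_sub (v₁ : V) {v₂ : V} (hne : v₁ ≠ v₂) (w : V → ℕ) (u v : V)
    (hu : 0 < w u) (hv : 0 < w v)
    (hnb : ¬((v₁ = u ∨ v₁ = v) ∧ (v₂ = u ∨ v₂ = v))) :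
    wmerge v₁ v₂ (fun x => w x - if x = u ∨ x = v then 1 else 0)
      = fun x => wmerge v₁ v₂ w x -
          if x = wbar v₁ hne u ∨ x = wbar v₁ hne v then 1 else 0 := by
  have hw1 : (v₁ = u ∨ v₁ = v) → 0 < w v₁ := by rintro (rfl | rfl) <;> assumption
  have hw2 : (v₂ = u ∨ v₂ = v) → 0 < w v₂ := by rintro (rfl | rfl) <;> assumption
  funext x
  obtain ⟨x, hx2⟩ := x
  by_cases hx1 : x = v₁
  · subst hx1
    unfold wmerge
    simp only [wbar_iff, if_pos rfl, true_and, if_true]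
    have hQ : (((v₂ = u ∨ x = u)) ∨ ((v₂ = v ∨ x = v))) ↔
        ((x = u ∨ x = v) ∨ (v₂ = u ∨ v₂ = v)) := by tauto
    simp only [hQ]
    by_cases hA : x = u ∨ x = v <;> by_cases hB : v₂ = u ∨ v₂ = v
    · exact absurd ⟨hA, hB⟩ hnb
    · have := hw1 hA; simp only [if_pos hA, if_neg hB, if_pos (Or.inl hA)]; omega
    · have := hw2 hB; simp only [if_neg hA, if_pos hB, if_pos (Or.inr hB)]; omega
    · have hAB : ¬((x = u ∨ x = v) ∨ (v₂ = u ∨ v₂ = v)) := by tauto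
      simp only [if_neg hA, if_neg hB, if_neg hAB]
      omega
  · unfold wmerge
    simp only [wbar_iff, if_neg hx1]
    have hQ : (((x = v₁ ∧ v₂ = u) ∨ x = u) ∨ ((x = v₁ ∧ v₂ = v) ∨ x = v)) ↔
        (x = u ∨ x = v) := by tauto
    simp only [hQ]

variable {E : V → V → Prop} {v₁ v₂ : V}

lemma wak_hnb (hsymm : Symmetric E) (hne : v₁ ≠ v₂) (hnadj : ¬ E v₁ v₂)
    {u v : V} (hE : E u v) : ¬((v₁ = u ∨ v₁ = v) ∧ (v₂ = u ∨ v₂ = v)) := by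
  rintro ⟨h1 | h1, h2 | h2⟩
  · exact hne (h1.trans h2.symm)
  · subst h1; subst h2; exact hnadj hE
  · subst h1; subst h2; exact hnadj (hsymm hE)
  · exact hne (h1.trans h2.symm)

lemma wmerge_pos (hne : v₁ ≠ v₂) (w : V → ℕ) {a : V} (ha : 0 < w a) :
    0 < wmerge v₁ v₂ w (wbar v₁ hne a) := by
  unfold wmerge wbar
  by_cases h1 : a = v₂
  · subst h1; simp; omega
  · simp only [dif_neg h1]
    by_cases h2 : a = v₁
    · subst h2; simp; omega
    · simpa [h2] using ha

lemma wmerge_move (hsymm : Symmetric E) (w : V → ℕ)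
    (hne : v₁ ≠ v₂) (hnadj : ¬ E v₁ v₂)
    (hN : ∀ x, x ≠ v₁ → x ≠ v₂ → (E v₁ x ↔ E v₂ x))
    (hloop : E v₁ v₁ ↔ E v₂ v₂)
    {w' : V → ℕ} (h : w' ∈ wakMoves E w) :
    wmerge v₁ v₂ w' ∈
      wakMoves (fun x y : {x : V // x ≠ v₂} => E x.1 y.1) (wmerge v₁ v₂ w) := by
  obtain ⟨u, v, hE, hu, hv, rfl⟩ := h
  refine ⟨wbar v₁ hne u, wbar v₁ hne v, ?_, wmerge_pos hne w hu, wmerge_pos hne w hv,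
    wmerge_sub v₁ hne w u v hu hv (wak_hnb hsymm hne hnadj hE)⟩
  show E (wbar v₁ hne u).1 (wbar v₁ hne v).1
  unfold wbar
  by_cases h1 : u = v₂ <;> by_cases h2 : v = v₂
  · subst h1; subst h2
    simpa using hloop.2 hE
  · subst h1
    have hv1 : v ≠ v₁ := by rintro rfl; exact hnadj (hsymm hE)
    simpa [h2] using (hN v hv1 h2).2 hE
  · subst h2
    have hu1 : u ≠ v₁ := by rintro rfl; exact hnadj hE
    simpa [h1] using hsymm ((hN u hu1 h1).2 (hsymm hE))
  · simpa [h1, h2] using hE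

lemma wmerge_lift (hsymm : Symmetric E) (w : V → ℕ)
    (hne : v₁ ≠ v₂) (hnadj : ¬ E v₁ v₂)
    (hN : ∀ x, x ≠ v₁ → x ≠ v₂ → (E v₁ x ↔ E v₂ x))
    (hloop : E v₁ v₁ ↔ E v₂ v₂)
    {u' : {x : V // x ≠ v₂} → ℕ}
    (h : u' ∈ wakMoves (fun x y : {x : V // x ≠ v₂} => E x.1 y.1) (wmerge v₁ v₂ w)) :
    ∃ w' ∈ wakMoves E w, wmerge v₁ v₂ w' = u' := by
  obtain ⟨a, b, hE, ha, hb, rfl⟩ := h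
  suffices hs : ∃ u v, E u v ∧ 0 < w u ∧ 0 < w v ∧
      wbar v₁ hne u = a ∧ wbar v₁ hne v = b by
    obtain ⟨u, v, hE', hu, hv, hau, hbv⟩ := hs
    refine ⟨_, ⟨u, v, hE', hu, hv, rfl⟩, ?_⟩
    rw [wmerge_sub v₁ hne w u v hu hv (wak_hnb hsymm hne hnadj hE'), hau, hbv]
  have hbar1 : wbar v₁ hne v₁ = ⟨v₁, hne⟩ := by unfold wbar; split_ifs <;> rfl
  have hbar2 : wbar v₁ hne v₂ = ⟨v₁, hne⟩ := by unfold wbar; simp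
  have hbarx : ∀ (c : {x : V // x ≠ v₂}), c.1 ≠ v₁ → wbar v₁ hne c.1 = c := by
    intro c hc
    unfold wbar
    simp [c.2]
  by_cases ha1 : a.1 = v₁ <;> by_cases hb1 : b.1 = v₁
  · -- loop at the merged vertex
    have hloop1 : E v₁ v₁ := by rw [ha1, hb1] at hE; exact hE
    have hab : a = ⟨v₁, hne⟩ := Subtype.ext ha1
    have hbb : b = ⟨v₁, hne⟩ := Subtype.ext hb1
    have hpos : 0 < w v₁ + w v₂ := by
      have := ha
      simp only [wmerge, ha1, if_pos] at this
      exact this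
    by_cases hw : 0 < w v₁
    · exact ⟨v₁, v₁, hloop1, hw, hw, by rw [hbar1, hab], by rw [hbar1, hbb]⟩
    · have hw2 : 0 < w v₂ := by omega
      exact ⟨v₂, v₂, hloop.1 hloop1, hw2, hw2, by rw [hbar2, hab], by rw [hbar2, hbb]⟩
  · have hE1 : E v₁ b.1 := by rw [← ha1]; exact hE
    have hab : a = ⟨v₁, hne⟩ := Subtype.ext ha1
    have hb' : 0 < w b.1 := by simpa [wmerge, hb1] using hb
    have hpos : 0 < w v₁ + w v₂ := by simpa [wmerge, ha1] using ha
    by_cases hw : 0 < w v₁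
    · exact ⟨v₁, b.1, hE1, hw, hb', by rw [hbar1, hab], hbarx b hb1⟩
    · have hw2 : 0 < w v₂ := by omega
      exact ⟨v₂, b.1, (hN b.1 hb1 b.2).1 hE1, hw2, hb', by rw [hbar2, hab], hbarx b hb1⟩
  · have hE1 : E a.1 v₁ := by rw [← hb1]; exact hE
    have hbb : b = ⟨v₁, hne⟩ := Subtype.ext hb1
    have ha' : 0 < w a.1 := by simpa [wmerge, ha1] using ha
    have hpos : 0 < w v₁ + w v₂ := by simpa [wmerge, hb1] using hb
    by_cases hw : 0 < w v₁
    · exact ⟨a.1, v₁, hE1, ha', hw, hbarx a ha1, by rw [hbar1, hbb]⟩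
    · have hw2 : 0 < w v₂ := by omega
      exact ⟨a.1, v₂, hsymm ((hN a.1 ha1 a.2).1 (hsymm hE1)), ha', hw2,
        hbarx a ha1, by rw [hbar2, hbb]⟩
  · have ha' : 0 < w a.1 := by simpa [wmerge, ha1] using ha
    have hb' : 0 < w b.1 := by simpa [wmerge, hb1] using hb
    exact ⟨a.1, b.1, hE, ha', hb', hbarx a ha1, hbarx b hb1⟩

end Aux

/-- Merging two false twins in WAK preserves the Grundy value.  Here `v₁` and `v₂` are
non-adjacent, have the same neighbourhood and the same loop status; they are merged into
the single vertex `v₁` (of the subtype of vertices distinct from `v₂`) carrying weight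
`ω(v₁) + ω(v₂)`. -/
theorem wak_merge_false_twins {V : Type} [Fintype V] [DecidableEq V]
    (E : V → V → Prop) (hsymm : Symmetric E) (w : V → ℕ)
    (v₁ v₂ : V) (hne : v₁ ≠ v₂) (hnadj : ¬ E v₁ v₂)
    (hN : ∀ x, x ≠ v₁ → x ≠ v₂ → (E v₁ x ↔ E v₂ x))
    (hloop : E v₁ v₁ ↔ E v₂ v₂) :
    wakGrundy E w =
      wakGrundy (fun x y : {x : V // x ≠ v₂} => E x.1 y.1)
        (fun x => if x.1 = v₁ then w v₁ + w v₂ else w x.1) := by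
  show wakGrundy E w =
    wakGrundy (fun x y : {x : V // x ≠ v₂} => E x.1 y.1) (wmerge v₁ v₂ w)
  suffices H : ∀ n (w : V → ℕ), ∑ x, w x = n →
      wakGrundy E w =
        wakGrundy (fun x y : {x : V // x ≠ v₂} => E x.1 y.1) (wmerge v₁ v₂ w) from
    H _ w rfl
  intro n
  induction n using Nat.strong_induction_on with
  | _ n ih =>
    intro w hn
    subst hn
    rw [wakGrundy, wakGrundy]
    congr 1
    ext y
    simp only [Set.mem_range, Subtype.exists, exists_prop]
    constructor
    · rintro ⟨w', hw', rfl⟩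
      exact ⟨wmerge v₁ v₂ w', wmerge_move hsymm w hne hnadj hN hloop hw',
        (ih _ (wakMoves_sum_lt E w hw') w' rfl).symm⟩
    · rintro ⟨u', hu', rfl⟩
      obtain ⟨w', hw', rfl⟩ := wmerge_lift hsymm w hne hnadj hN hloop hu'
      exact ⟨w', hw', ih _ (wakMoves_sum_lt E w hw') w' rfl⟩
end

section
/- In WAK, deleting a useless vertex (a loopless vertex all of whose neighbors carry loops) does not change the Grundy value of the game. -/
/-- Deleting a useless vertex in WAK preserves the Grundy value.  A vertex `u` is
useless if it carries no loop and all its neighbours carry loops.  The reduced game is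
played on the graph induced on the remaining vertices. -/
theorem wak_delete_useless {V : Type} [Fintype V] [DecidableEq V]
    (E : V → V → Prop) (hsymm : Symmetric E) (w : V → ℕ)
    (u : V) (hnoloop : ¬ E u u) (hnbr : ∀ v, E u v → E v v) :
    wakGrundy E w =
      wakGrundy (fun x y : {x : V // x ≠ u} => E x.1 y.1) (fun x => w x.1) := by
  suffices h : ∀ n (w : V → ℕ), ∑ x, w x = n →
      wakGrundy E w = wakGrundy (fun x y : {x : V // x ≠ u} => E x.1 y.1) (fun x => w x.1) from
    h _ w rfl
  intro n
  induction n using Nat.strong_induction_on with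
  | _ n ih =>
    intro w hw
    rw [wakGrundy, wakGrundy]
    congr 1
    ext g
    simp only [Set.mem_range, Subtype.exists]
    constructor
    · rintro ⟨w', hw', rfl⟩
      have hG : wakGrundy E w' =
          wakGrundy (fun x y : {x : V // x ≠ u} => E x.1 y.1)
            (fun x : {x : V // x ≠ u} => w' x.1) :=
        ih _ (hw ▸ wakMoves_sum_lt E w hw') w' rfl
      obtain ⟨a, b, hab, ha, hb, hw'eq⟩ := hw'
      by_cases hau : a = u
      · rw [hau] at hab ha hw'eq
        have hbu : b ≠ u := fun h => hnoloop (h ▸ hab)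
        refine ⟨_, ⟨⟨b, hbu⟩, ⟨b, hbu⟩, hnbr b hab, hb, hb, rfl⟩, ?_⟩
        rw [hG]; congr 1; funext x
        subst hw'eq
        have hx := x.2
        by_cases hxb : x.1 = b <;> simp [Subtype.ext_iff, hxb, hx]
      · by_cases hbu : b = u
        · rw [hbu] at hab hb hw'eq
          have haa : E a a := hnbr a (hsymm hab)
          refine ⟨_, ⟨⟨a, hau⟩, ⟨a, hau⟩, haa, ha, ha, rfl⟩, ?_⟩
          rw [hG]; congr 1; funext x
          subst hw'eq
          have hx := x.2
          by_cases hxa : x.1 = a <;> simp [Subtype.ext_iff, hxa, hx]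
        · refine ⟨_, ⟨⟨a, hau⟩, ⟨b, hbu⟩, hab, ha, hb, rfl⟩, ?_⟩
          rw [hG]; congr 1; funext x
          subst hw'eq
          simp [Subtype.ext_iff]
    · rintro ⟨z, hz, rfl⟩
      obtain ⟨a, b, hab, ha, hb, rfl⟩ := hz
      set w' : V → ℕ := fun x => w x - (if x = a.1 ∨ x = b.1 then 1 else 0) with hw'def
      have hmem : w' ∈ wakMoves E w := ⟨a.1, b.1, hab, ha, hb, rfl⟩
      refine ⟨w', hmem, ?_⟩
      rw [ih _ (hw ▸ wakMoves_sum_lt E w hmem) w' rfl]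
      congr 1; funext x
      simp [hw'def, Subtype.ext_iff]
end

section
/- In WAK, deleting a heavy vertex u (a loopless vertex with ω(u) ≥ Σ_{v ∈ N(u)} ω(v)) and attaching a loop to each of its neighbors does not change the Grundy value of the game. -/
/-- Heaviness is preserved by a move on an edge `(u, b)`. -/
lemma heavy_step {V : Type} [Fintype V] [DecidableEq V]
    (E : V → V → Prop) [DecidableRel E] (u : V)
    (hnoloop : ¬ E u u) (w : V → ℕ) (b : V) (hub : E u b)
    (hb : 0 < w b) (hu : 0 < w u)
    (hheavy : ∑ v ∈ Finset.univ.filter (fun v => E u v), w v ≤ w u) :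
    ∑ v ∈ Finset.univ.filter (fun v => E u v),
        (w v - (if v = u ∨ v = b then 1 else 0)) ≤
      w u - (if u = u ∨ u = b then 1 else 0) := by
  classical
  set N := Finset.univ.filter (fun v => E u v) with hN
  have hbN : b ∈ N := by simp [hN, hub]
  have h1 : ∑ v ∈ N, (w v - (if v = u ∨ v = b then 1 else 0)) =
      ∑ v ∈ N.erase b, w v + (w b - 1) := by
    rw [← Finset.sum_erase_add _ _ hbN]
    congr 1
    · refine Finset.sum_congr rfl fun v hv => ?_
      have hvb : v ≠ b := Finset.ne_of_mem_erase hv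
      have hvu : v ≠ u := by
        rintro rfl
        exact hnoloop (by simpa [hN] using Finset.mem_of_mem_erase hv)
      simp [hvb, hvu]
    · simp
  have h2 : ∑ v ∈ N.erase b, w v + w b = ∑ v ∈ N, w v :=
    Finset.sum_erase_add _ _ hbN
  simp only [true_or, if_pos] at *
  omega

/-- Deleting a heavy vertex in WAK preserves the Grundy value.  A vertex `u` is heavy
if it carries no loop and its weight is at least the sum of the weights of its
neighbours.  The reduction deletes `u` and attaches a loop to each of its former
neighbours. -/
theorem wak_delete_heavy {V : Type} [Fintype V] [DecidableEq V]
    (E : V → V → Prop) [DecidableRel E] (hsymm : Symmetric E) (w : V → ℕ)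
    (u : V) (hnoloop : ¬ E u u)
    (hheavy : ∑ v ∈ Finset.univ.filter (fun v => E u v), w v ≤ w u) :
    wakGrundy E w =
      wakGrundy (fun x y : {x : V // x ≠ u} => E x.1 y.1 ∨ (x = y ∧ E u x.1))
        (fun x => w x.1) := by
  classical
  set E' : {x : V // x ≠ u} → {x : V // x ≠ u} → Prop :=
    fun x y => E x.1 y.1 ∨ (x = y ∧ E u x.1) with hE'
  suffices H : ∀ n (w : V → ℕ), ∑ x, w x ≤ n →
      (∑ v ∈ Finset.univ.filter (fun v => E u v), w v ≤ w u) →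
      wakGrundy E w = wakGrundy E' (fun x => w x.1) by
    exact H (∑ x, w x) w le_rfl hheavy
  clear hheavy w
  intro n
  induction n using Nat.strong_induction_on with
  | _ n ih =>
  intro w hsum hheavy
  rw [wakGrundy, wakGrundy]
  congr 1
  ext g
  simp only [Set.mem_range, Subtype.exists]
  constructor
  · rintro ⟨w', hw', rfl⟩
    obtain ⟨a, b, hab, ha, hb, rfl⟩ := hw'
    set w' : V → ℕ := fun x => w x - (if x = a ∨ x = b then 1 else 0) with hw'def
    have hlt : ∑ x, w' x < n :=
      lt_of_lt_of_le (wakMoves_sum_lt E w ⟨a, b, hab, ha, hb, rfl⟩) hsum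
    by_cases hau : a = u
    · subst hau
      have hbu : b ≠ a := by rintro rfl; exact hnoloop hab
      have hheavy' : ∑ v ∈ Finset.univ.filter (fun v => E a v), w' v ≤ w' a := by
        simpa only [hw'def] using heavy_step E a hnoloop w b hab hb ha hheavy
      refine ⟨fun x => (fun x => w x.1) x - (if x = ⟨b, hbu⟩ ∨ x = ⟨b, hbu⟩ then 1 else 0),
        ⟨⟨b, hbu⟩, ⟨b, hbu⟩, Or.inr ⟨rfl, hab⟩, hb, hb, rfl⟩, ?_⟩
      rw [ih (∑ x, w' x) hlt w' le_rfl hheavy']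
      congr 1
      funext x
      have hx : x.1 ≠ a := x.2
      simp only [hw'def, Subtype.ext_iff, hx, false_or, or_self]
    · by_cases hbu : b = u
      · subst hbu
        have hheavy' : ∑ v ∈ Finset.univ.filter (fun v => E b v), w' v ≤ w' b := by
          have h := heavy_step E b hnoloop w a (hsymm hab) ha hb hheavy
          simp only [hw'def]
          simp only [or_comm] at h ⊢
          exact h
        refine ⟨fun x => (fun x => w x.1) x - (if x = ⟨a, hau⟩ ∨ x = ⟨a, hau⟩ then 1 else 0),
          ⟨⟨a, hau⟩, ⟨a, hau⟩, Or.inr ⟨rfl, hsymm hab⟩, ha, ha, rfl⟩, ?_⟩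
        rw [ih (∑ x, w' x) hlt w' le_rfl hheavy']
        congr 1
        funext x
        have hx : x.1 ≠ b := x.2
        simp only [hw'def, Subtype.ext_iff, hx, or_false, or_self]
      · have hheavy' : ∑ v ∈ Finset.univ.filter (fun v => E u v), w' v ≤ w' u := by
          have h1 : w' u = w u := by simp [hw'def, Ne.symm hau, Ne.symm hbu]
          have h2 : ∑ v ∈ Finset.univ.filter (fun v => E u v), w' v ≤
              ∑ v ∈ Finset.univ.filter (fun v => E u v), w v :=
            Finset.sum_le_sum fun v _ => Nat.sub_le _ _
          omega
        refine ⟨fun x => (fun x => w x.1) x - (if x = ⟨a, hau⟩ ∨ x = ⟨b, hbu⟩ then 1 else 0),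
          ⟨⟨a, hau⟩, ⟨b, hbu⟩, Or.inl hab, ha, hb, rfl⟩, ?_⟩
        rw [ih (∑ x, w' x) hlt w' le_rfl hheavy']
        congr 1
        funext x
        simp only [hw'def, Subtype.ext_iff]
  · rintro ⟨z', hz', rfl⟩
    obtain ⟨x, y, hxy, hx, hy, rfl⟩ := hz'
    rcases hxy with h | ⟨rfl, hux⟩
    · set w' : V → ℕ := fun t => w t - (if t = x.1 ∨ t = y.1 then 1 else 0) with hw'def
      have hmem : w' ∈ wakMoves E w := ⟨x.1, y.1, h, hx, hy, rfl⟩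
      have hlt : ∑ t, w' t < n := lt_of_lt_of_le (wakMoves_sum_lt E w hmem) hsum
      have hheavy' : ∑ v ∈ Finset.univ.filter (fun v => E u v), w' v ≤ w' u := by
        have h1 : w' u = w u := by
          simp [hw'def, Ne.symm x.2, Ne.symm y.2]
        have h2 : ∑ v ∈ Finset.univ.filter (fun v => E u v), w' v ≤
            ∑ v ∈ Finset.univ.filter (fun v => E u v), w v :=
          Finset.sum_le_sum fun v _ => Nat.sub_le _ _
        omega
      refine ⟨w', hmem, ?_⟩
      rw [ih (∑ t, w' t) hlt w' le_rfl hheavy']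
      congr 1
      funext t
      simp only [hw'def, Subtype.ext_iff]
    · have hx' : 0 < w x.1 := hx
      have hxN : x.1 ∈ Finset.univ.filter (fun v => E u v) := by simp [hux]
      have hu : 0 < w u := by
        have hle := Finset.single_le_sum (f := w) (fun i _ => Nat.zero_le _) hxN
        omega
      set w' : V → ℕ := fun t => w t - (if t = u ∨ t = x.1 then 1 else 0) with hw'def
      have hmem : w' ∈ wakMoves E w := ⟨u, x.1, hux, hu, hx', rfl⟩
      have hlt : ∑ t, w' t < n := lt_of_lt_of_le (wakMoves_sum_lt E w hmem) hsum
      have hheavy' : ∑ v ∈ Finset.univ.filter (fun v => E u v), w' v ≤ w' u := by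
        simpa only [hw'def] using heavy_step E u hnoloop w x.1 hux hx' hu hheavy
      refine ⟨w', hmem, ?_⟩
      rw [ih (∑ t, w' t) hlt w' le_rfl hheavy']
      congr 1
      funext t
      have ht : t.1 ≠ u := t.2
      simp only [hw'def, Subtype.ext_iff, ht, false_or, or_self]
end

section
/- For every position of WAK there is a position of Arc-Kayles (a loopless weighted graph in which every vertex has weight 1) with the same Grundy value. -/
/-!
Blow each vertex `u` up into `w u` pairwise non-adjacent copies (false twins), each joined to
all copies of the neighbours of `u`, and give every copy a private pendant vertex, joined to it
exactly when `u` carries a loop. As long as every live copy still has its pendant alive,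
counting the live copies of each vertex maps the moves of the blown-up Arc-Kayles position
onto the moves of the WAK position, so the Grundy values agree by induction on the total weight.
-/

section WakMove

variable {V : Type*} [DecidableEq V]

def wakMove (w : V → ℕ) (u v : V) : V → ℕ := fun x => w x - if x = u ∨ x = v then 1 else 0

theorem wakMove_comm (w : V → ℕ) (u v : V) : wakMove w u v = wakMove w v u := by
  funext x
  simp only [wakMove, or_comm]

theorem ite_or_le {f : V → ℕ} {u v : V} (hu : 0 < f u) (hv : 0 < f v) (x : V) :
    (if x = u ∨ x = v then 1 else 0) ≤ f x := by
  split_ifs with hx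
  · rcases hx with rfl | rfl <;> assumption
  · exact Nat.zero_le _

end WakMove

theorem wakGrundy_eq_mex_image {V : Type*} [Fintype V] [DecidableEq V] (E : V → V → Prop)
    (w : V → ℕ) : wakGrundy E w = mex (wakGrundy E '' wakMoves E w) := by
  rw [wakGrundy, Set.image_eq_range]

theorem wakGrundy_eq_of_image_wakMoves {V W : Type*} [Fintype V] [DecidableEq V] [Fintype W]
    [DecidableEq W] {E : V → V → Prop} {F : W → W → Prop} {P : (V → ℕ) → Prop}
    (φ : (V → ℕ) → W → ℕ) (hP : ∀ f, P f → ∀ f' ∈ wakMoves E f, P f')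
    (hφ : ∀ f, P f → φ '' wakMoves E f = wakMoves F (φ f)) (f : V → ℕ) (hf : P f) :
    wakGrundy E f = wakGrundy F (φ f) := by
  induction h : ∑ x, f x using Nat.strong_induction_on generalizing f with
  | _ n ih =>
    rw [wakGrundy_eq_mex_image, wakGrundy_eq_mex_image, ← hφ f hf, Set.image_image]
    congr 1
    refine Set.image_congr fun f' hf' => ?_
    exact ih _ (h ▸ wakMoves_sum_lt E f hf') f' (hP f hf f' hf') rfl

namespace WakBlowup

variable {V : Type*} (E : V → V → Prop) (w : V → ℕ)

abbrev Copies : Type _ := Σ u : V, Fin (w u)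

-- `.inl a` is the copy `a`, `.inr a` its pendant; a loop at `u` becomes the pendant edges.
def blowupRel : Copies w ⊕ Copies w → Copies w ⊕ Copies w → Prop
  | .inl a, .inl b => E a.1 b.1 ∧ a.1 ≠ b.1
  | .inl a, .inr b => a = b ∧ E a.1 a.1
  | .inr _, _ => False

def blowup : SimpleGraph (Copies w ⊕ Copies w) := SimpleGraph.fromRel (blowupRel E w)

def base : Copies w ⊕ Copies w → V := Sum.elim Sigma.fst Sigma.fst

def liveCount (f : Copies w ⊕ Copies w → ℕ) (u : V) : ℕ := ∑ i : Fin (w u), f (.inl ⟨u, i⟩)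

def PendantsCover (f : Copies w ⊕ Copies w → ℕ) : Prop := ∀ a, f (.inl a) ≤ f (.inr a)

variable {E w}

theorem blowupRel.base {x y : Copies w ⊕ Copies w} (h : blowupRel E w x y) :
    E (base w x) (base w y) := by
  rcases x with a | a <;> rcases y with b | b
  · exact h.1
  · obtain ⟨rfl, h⟩ := h
    exact h
  all_goals exact h.elim

theorem blowup_adj_of_blowupRel {x y : Copies w ⊕ Copies w} (h : blowupRel E w x y) :
    (blowup E w).Adj x y := by
  refine ⟨?_, Or.inl h⟩
  rintro rfl
  rcases x with a | a
  · exact h.2 rfl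
  · exact h

theorem eq_inl_of_blowup_adj_inr {x : Copies w ⊕ Copies w} {a : Copies w}
    (h : (blowup E w).Adj x (.inr a)) : x = .inl a := by
  rcases x with b | b
  · obtain ⟨-, ⟨rfl, -⟩ | h⟩ := h
    · rfl
    · exact h.elim
  · obtain ⟨-, h | h⟩ := h <;> exact h.elim

theorem exists_pos_of_liveCount_pos {f : Copies w ⊕ Copies w → ℕ} {u : V}
    (h : 0 < liveCount w f u) : ∃ i, 0 < f (.inl ⟨u, i⟩) := by
  obtain ⟨i, -, hi⟩ := Finset.sum_pos_iff.mp h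
  exact ⟨i, hi⟩

variable [DecidableEq V]

theorem sum_fin_ite_sigma_eq (a : Copies w) (u : V) :
    ∑ i : Fin (w u), (if (⟨u, i⟩ : Copies w) = a then 1 else 0) = if u = a.1 then 1 else 0 := by
  obtain ⟨v, j⟩ := a
  by_cases hu : u = v
  · subst hu
    simp
  · simp [hu]

theorem liveCount_indicator {x y : Copies w ⊕ Copies w} (h : blowupRel E w x y) :
    liveCount w (fun z => if z = x ∨ z = y then 1 else 0) =
      fun u => if u = base w x ∨ u = base w y then 1 else 0 := by
  funext u
  rcases x with a | a <;> rcases y with b | b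
  · have hab : a ≠ b := fun hab => h.2 (hab ▸ rfl)
    have hsplit : ∀ c : Copies w, (if (Sum.inl c : Copies w ⊕ Copies w) = .inl a ∨
        (Sum.inl c : Copies w ⊕ Copies w) = .inl b then 1 else 0) =
        (if c = a then 1 else 0) + (if c = b then 1 else 0) := by
      intro c
      by_cases hca : c = a
      · subst hca
        simp [hab]
      · simp [hca]
    simp only [liveCount, hsplit, Finset.sum_add_distrib, sum_fin_ite_sigma_eq, base,
      Sum.elim_inl]
    by_cases hua : u = a.1
    · simp [hua, h.2]
    · simp [hua]
  · obtain ⟨rfl, -⟩ := h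
    simp only [liveCount, Sum.inl.injEq, reduceCtorEq, or_false, sum_fin_ite_sigma_eq, base,
      Sum.elim_inl, Sum.elim_inr, or_self]
  all_goals exact h.elim

theorem liveCount_wakMove {f : Copies w ⊕ Copies w → ℕ} {x y : Copies w ⊕ Copies w}
    (h : blowupRel E w x y) (hx : 0 < f x) (hy : 0 < f y) :
    liveCount w (wakMove f x y) = wakMove (liveCount w f) (base w x) (base w y) := by
  funext u
  rw [wakMove, ← congrFun (liveCount_indicator h) u]
  exact Finset.sum_tsub_distrib _ fun i _ => ite_or_le hx hy _

theorem liveCount_base_pos {f : Copies w ⊕ Copies w → ℕ} {x y z : Copies w ⊕ Copies w}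
    (h : blowupRel E w x y) (hx : 0 < f x) (hy : 0 < f y) (hz : z = x ∨ z = y) :
    0 < liveCount w f (base w z) :=
  calc 0 < liveCount w (fun z => if z = x ∨ z = y then 1 else 0) (base w z) := by
        rw [liveCount_indicator h]
        rcases hz with rfl | rfl <;> simp
    _ ≤ liveCount w f (base w z) := Finset.sum_le_sum fun i _ => ite_or_le hx hy _

theorem liveCount_wakMove_mem_wakMoves {f : Copies w ⊕ Copies w → ℕ}
    {x y : Copies w ⊕ Copies w} (h : blowupRel E w x y) (hx : 0 < f x) (hy : 0 < f y) :
    liveCount w (wakMove f x y) ∈ wakMoves E (liveCount w f) :=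
  ⟨base w x, base w y, h.base, liveCount_base_pos h hx hy (.inl rfl),
    liveCount_base_pos h hx hy (.inr rfl), liveCount_wakMove h hx hy⟩

theorem PendantsCover.wakMove {f : Copies w ⊕ Copies w → ℕ} (hf : PendantsCover w f)
    {x y : Copies w ⊕ Copies w} (h : (blowup E w).Adj x y) :
    PendantsCover w (wakMove f x y) := by
  intro a
  have hcover : (if Sum.inr a = x ∨ Sum.inr a = y then 1 else 0) ≤
      (if (Sum.inl a : Copies w ⊕ Copies w) = x ∨ Sum.inl a = y then 1 else 0) := by
    split_ifs with hr hl
    · exact le_rfl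
    · rcases hr with rfl | rfl
      · exact absurd (eq_inl_of_blowup_adj_inr h.symm).symm (by tauto)
      · exact absurd (eq_inl_of_blowup_adj_inr h).symm (by tauto)
    all_goals exact Nat.zero_le _
  exact (Nat.sub_le_sub_left hcover _).trans (Nat.sub_le_sub_right (hf a) _)

theorem image_liveCount_wakMoves {f : Copies w ⊕ Copies w → ℕ} (hf : PendantsCover w f) :
    liveCount w '' wakMoves (blowup E w).Adj f = wakMoves E (liveCount w f) := by
  ext w'
  constructor
  · rintro ⟨_, ⟨x, y, ⟨-, h | h⟩, hx, hy, rfl⟩, rfl⟩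
    · exact liveCount_wakMove_mem_wakMoves h hx hy
    · change liveCount w (wakMove f x y) ∈ _
      rw [wakMove_comm]
      exact liveCount_wakMove_mem_wakMoves h hy hx
  · rintro ⟨u, v, huv, hu, hv, rfl⟩
    obtain ⟨i, hi⟩ := exists_pos_of_liveCount_pos hu
    by_cases hloop : u = v
    · subst hloop
      have h : blowupRel E w (.inl ⟨u, i⟩) (.inr ⟨u, i⟩) := ⟨rfl, huv⟩
      have hpendant := hi.trans_le (hf _)
      exact ⟨_, ⟨_, _, blowup_adj_of_blowupRel h, hi, hpendant, rfl⟩,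
        liveCount_wakMove h hi hpendant⟩
    · obtain ⟨j, hj⟩ := exists_pos_of_liveCount_pos hv
      have h : blowupRel E w (.inl ⟨u, i⟩) (.inl ⟨v, j⟩) := ⟨huv, hloop⟩
      exact ⟨_, ⟨_, _, blowup_adj_of_blowupRel h, hi, hj, rfl⟩, liveCount_wakMove h hi hj⟩

end WakBlowup

open WakBlowup in
theorem wak_equiv_arcKayles_general {V : Type} [Fintype V] [DecidableEq V]
    (E : V → V → Prop) (w : V → ℕ) :
    ∃ (V' : Type) (hf : Fintype V') (hd : DecidableEq V') (G : SimpleGraph V'),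
      @wakGrundy V' hf hd G.Adj (fun _ => 1) = wakGrundy E w := by
  refine ⟨Copies w ⊕ Copies w, inferInstance, inferInstance, blowup E w, ?_⟩
  have hw : liveCount w (fun _ => 1) = w := by
    funext u
    simp [liveCount]
  rw [wakGrundy_eq_of_image_wakMoves (liveCount w) (fun f hf f' hf' => ?_)
    (fun f hf => image_liveCount_wakMoves hf) _ (fun _ => le_rfl), hw]
  obtain ⟨x, y, hxy, -, -, rfl⟩ := hf'
  exact hf.wakMove hxy

/-- Every WAK position has an Arc-Kayles position with the same Grundy value.
An Arc-Kayles position is WAK on a loopless simple graph in which every vertex has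
weight `1`. -/
theorem wak_equiv_arcKayles {V : Type} [Fintype V] [DecidableEq V]
    (E : V → V → Prop) (hsymm : Symmetric E) (w : V → ℕ) :
    ∃ (V' : Type) (hf : Fintype V') (hd : DecidableEq V') (G : SimpleGraph V'),
      @wakGrundy V' hf hd G.Adj (fun _ => 1) = wakGrundy E w :=
  wak_equiv_arcKayles_general E w
end
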